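/- arXiv:2403.02212 — 9 statements merged into one kernel-verified Lean document; each statement's English description precedes it below -/
import Mathlib

section
/- Let A be a symmetric real n×n matrix, let ε > 0, and define F(x,y) := ⟨x, Ay⟩ − ‖A(εx − y)‖₁. Then for every x, y ∈ [−1,1]^n one has ⟨x, Ax⟩ ≥ F(x,y)/ε. -/
open Finset

/-- Let `A` be a symmetric real `n × n` matrix, let `ε > 0`, and define
`F(x, y) := ⟨x, A y⟩ - ‖A (ε x - y)‖₁`.  Then for every `x, y ∈ [-1, 1]^n` one has
`⟨x, A x⟩ ≥ F(x, y) / ε`. -/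
theorem quadratic_form_lower_bound_by_F
    (n : ℕ) (A : Matrix (Fin n) (Fin n) ℝ) (hA : A.IsSymm)
    (ε : ℝ) (hε : 0 < ε)
    (x y : Fin n → ℝ)
    (hx : ∀ i, x i ∈ Set.Icc (-1 : ℝ) 1) (hy : ∀ i, y i ∈ Set.Icc (-1 : ℝ) 1) :
    (∑ i, x i * A.mulVec x i) ≥
      ((∑ i, x i * A.mulVec y i) -
        ∑ i, |A.mulVec (fun j => ε * x j - y j) i|) / ε := by
  rw [ge_iff_le, div_le_iff₀ hε]
  set z : Fin n → ℝ := A.mulVec (fun j => ε * x j - y j) with hz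
  have key : ∀ i, z i = ε * A.mulVec x i - A.mulVec y i := by
    intro i
    simp [hz, Matrix.mulVec, dotProduct, mul_sub, Finset.sum_sub_distrib,
      Finset.mul_sum, mul_left_comm]
  have hb : ∀ i ∈ Finset.univ, -(|z i|) ≤ x i * z i := by
    intro i _
    have hxi : |x i| ≤ 1 := abs_le.mpr ⟨(hx i).1, (hx i).2⟩
    have h1 : |x i * z i| ≤ |z i| := by
      rw [abs_mul]
      nlinarith [abs_nonneg (z i), abs_nonneg (x i)]
    linarith [neg_abs_le (x i * z i)]
  have hsum : -(∑ i, |z i|) ≤ ∑ i, x i * z i := by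
    rw [← Finset.sum_neg_distrib]
    exact Finset.sum_le_sum hb
  have hexp : ∑ i, x i * z i = ε * ∑ i, x i * A.mulVec x i - ∑ i, x i * A.mulVec y i := by
    rw [Finset.mul_sum, ← Finset.sum_sub_distrib]
    apply Finset.sum_congr rfl
    intro i _
    rw [key i]; ring
  linarith [hsum, hexp.symm ▸ hsum]
end

section
/- Let A be a real n×n matrix, let ε ∈ [0,1], and let x* ∈ {−1,1}^n. Let x̃ = (x̃₁,…,x̃ₙ) be mutually independent {−1,1}-valued random variables with Pr(x̃ᵢ = xᵢ*) = (1+ε)/2 for each i. Then E[‖A(εx* − x̃)‖₁] ≤ √(n(1−ε²)) · ‖A‖_F; in particular E[‖A(εx* − x̃)‖₁] ≤ √n · ‖A‖_F. -/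
/-!
The coordinates of the error `εx* − x̃` are independent and centred, each with second
moment `1 − ε²`, so all cross terms vanish and every row `(A(εx* − x̃))ᵢ` has second
moment `(1 − ε²) ∑ⱼ Aᵢⱼ²`. A single weighted Cauchy–Schwarz inequality over the pairs
(row, advice string), whose total weight is `n`, then bounds the expected `ℓ¹`-norm by
`√n · √((1 − ε²) ‖A‖_F²)`.
-/

open Finset

noncomputable def sg (b : Bool) : ℝ := if b then 1 else -1

noncomputable def advProb {ι : Type*} [Fintype ι] (ε : ℝ) (xs : ι → ℝ) (s : ι → Bool) : ℝ :=
  ∏ i, if sg (s i) = xs i then (1 + ε) / 2 else (1 - ε) / 2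

section ProdWeight

variable {ι β R : Type*} [Fintype ι] [CommSemiring R]

def prodWeight (w : ι → β → R) (s : ι → β) : R := ∏ i, w i (s i)

variable [DecidableEq ι] [Fintype β] (w : ι → β → R)

theorem sum_prodWeight_mul_prod (g : ι → β → R) :
    ∑ s, prodWeight w s * ∏ i, g i (s i) = ∏ i, ∑ b, w i b * g i b := by
  rw [Fintype.prod_sum]
  simp only [prodWeight, prod_mul_distrib]

variable {w} (hw : ∀ i, ∑ b, w i b = 1)
include hw

theorem sum_prodWeight : ∑ s, prodWeight w s = 1 := by
  simpa [hw] using sum_prodWeight_mul_prod w 1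

theorem sum_prodWeight_mul_apply (j : ι) (f : β → R) :
    ∑ s, prodWeight w s * f (s j) = ∑ b, w j b * f b := by
  have hf : ∀ s : ι → β, ∏ i, (Pi.mulSingle j f : ι → β → R) i (s i) = f (s j) := fun s =>
    (Fintype.prod_eq_single j fun i hi => by simp [hi]).trans (by simp)
  have hw' : ∏ i, ∑ b, w i b * (Pi.mulSingle j f : ι → β → R) i b = ∑ b, w j b * f b :=
    (Fintype.prod_eq_single j fun i hi => by simp [hi, hw]).trans (by simp)
  rw [← hw', ← sum_prodWeight_mul_prod]
  simp only [hf]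

theorem sum_prodWeight_mul_apply_mul_apply {j k : ι} (hjk : j ≠ k) (f g : β → R) :
    ∑ s, prodWeight w s * (f (s j) * g (s k)) = (∑ b, w j b * f b) * ∑ b, w k b * g b := by
  have hfg : ∀ s : ι → β,
      ∏ i, (Pi.mulSingle j f * Pi.mulSingle k g : ι → β → R) i (s i) = f (s j) * g (s k) := fun s =>
    (Fintype.prod_eq_mul j k hjk fun i hi => by simp [hi.1, hi.2]).trans (by simp [hjk, hjk.symm])
  have hw' : ∏ i, ∑ b, w i b * (Pi.mulSingle j f * Pi.mulSingle k g : ι → β → R) i b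
      = (∑ b, w j b * f b) * ∑ b, w k b * g b :=
    (Fintype.prod_eq_mul j k hjk fun i hi => by simp [hi.1, hi.2, hw]).trans
      (by simp [hjk, hjk.symm])
  rw [← hw', ← sum_prodWeight_mul_prod]
  simp only [hfg]

theorem sum_prodWeight_mul_sum_sq (a : ι → R) (Z : ι → β → R)
    (hZ : ∀ i, ∑ b, w i b * Z i b = 0) :
    ∑ s, prodWeight w s * (∑ j, a j * Z j (s j)) ^ 2 = ∑ j, a j ^ 2 * ∑ b, w j b * Z j b ^ 2 := by
  have hcov : ∀ j k, ∑ s, prodWeight w s * (Z j (s j) * Z k (s k))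
      = if j = k then ∑ b, w j b * Z j b ^ 2 else 0 := by
    intro j k
    split_ifs with hjk
    · subst hjk
      simpa only [sq] using sum_prodWeight_mul_apply hw j fun b => Z j b * Z j b
    · simp [sum_prodWeight_mul_apply_mul_apply hw hjk, hZ]
  calc ∑ s, prodWeight w s * (∑ j, a j * Z j (s j)) ^ 2
      = ∑ j, ∑ k, a j * a k * ∑ s, prodWeight w s * (Z j (s j) * Z k (s k)) := by
        simp_rw [sq, sum_mul_sum, mul_sum]
        rw [sum_comm]
        refine sum_congr rfl fun j _ => ?_
        rw [sum_comm]
        exact sum_congr rfl fun k _ => sum_congr rfl fun s _ => by ring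
    _ = ∑ j, a j ^ 2 * ∑ b, w j b * Z j b ^ 2 := by
        simp [hcov, sq]

end ProdWeight

theorem Real.sum_mul_abs_le_sqrt_mul_sqrt {α : Type*} (s : Finset α) {w y : α → ℝ}
    (hw : ∀ i, 0 ≤ w i) :
    ∑ i ∈ s, w i * |y i| ≤ √(∑ i ∈ s, w i) * √(∑ i ∈ s, w i * y i ^ 2) := by
  have hwy : ∀ i, √(w i) * √(w i * y i ^ 2) = w i * |y i| := fun i => by
    rw [← Real.sqrt_mul (hw i), show w i * (w i * y i ^ 2) = (w i * |y i|) ^ 2 by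
      rw [mul_pow, sq_abs]; ring, Real.sqrt_sq (mul_nonneg (hw i) (abs_nonneg _))]
  simpa only [hwy] using
    Real.sum_sqrt_mul_sqrt_le s hw fun i => mul_nonneg (hw i) (sq_nonneg (y i))

section LabelAdvice

noncomputable def advWeight (ε x : ℝ) (b : Bool) : ℝ :=
  if sg b = x then (1 + ε) / 2 else (1 - ε) / 2

theorem advProb_eq_prodWeight {ι : Type*} [Fintype ι] (ε : ℝ) (xs : ι → ℝ) :
    advProb ε xs = prodWeight fun i => advWeight ε (xs i) :=
  rfl

variable {ε x : ℝ}

theorem advWeight_nonneg (hε : |ε| ≤ 1) (b : Bool) : 0 ≤ advWeight ε x b := by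
  obtain ⟨h₀, h₁⟩ := abs_le.1 hε
  unfold advWeight
  split <;> linarith

variable (hx : x = 1 ∨ x = -1)
include hx

theorem sum_advWeight : ∑ b, advWeight ε x b = 1 := by
  rcases hx with rfl | rfl <;> norm_num [advWeight, sg] <;> ring

theorem sum_advWeight_mul_error : ∑ b, advWeight ε x b * (ε * x - sg b) = 0 := by
  rcases hx with rfl | rfl <;> norm_num [advWeight, sg] <;> ring

theorem sum_advWeight_mul_error_sq : ∑ b, advWeight ε x b * (ε * x - sg b) ^ 2 = 1 - ε ^ 2 := by
  rcases hx with rfl | rfl <;> norm_num [advWeight, sg] <;> ring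

end LabelAdvice

section LabelAdviceError

variable {κ ι : Type*} [Fintype ι] [DecidableEq ι] (A : Matrix κ ι ℝ) {ε : ℝ}
  {xstar : ι → ℝ} (hxs : ∀ i, xstar i = 1 ∨ xstar i = -1)
include hxs

theorem sum_advProb_mul_mulVec_error_sq (i : κ) :
    ∑ s : ι → Bool, advProb ε xstar s * A.mulVec (fun j => ε * xstar j - sg (s j)) i ^ 2
      = (1 - ε ^ 2) * ∑ j, A i j ^ 2 := by
  rw [advProb_eq_prodWeight, mul_comm, sum_mul]
  simpa only [Matrix.mulVec, dotProduct, sum_advWeight_mul_error_sq (hxs _)] using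
    sum_prodWeight_mul_sum_sq (fun j => sum_advWeight (hxs j)) (A i)
      (fun j b => ε * xstar j - sg b) fun j => sum_advWeight_mul_error (hxs j)

theorem sum_advProb_mul_norm_mulVec_error_le [Fintype κ] (hε : |ε| ≤ 1) :
    ∑ s : ι → Bool, advProb ε xstar s * ∑ i, |A.mulVec (fun j => ε * xstar j - sg (s j)) i|
      ≤ √(Fintype.card κ * (1 - ε ^ 2)) * √(∑ i, ∑ j, A i j ^ 2) := by
  set Y : κ × (ι → Bool) → ℝ := fun p => A.mulVec (fun j => ε * xstar j - sg (p.2 j)) p.1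
  set P : κ × (ι → Bool) → ℝ := fun p => advProb ε xstar p.2
  have hP : ∀ p, 0 ≤ P p := fun p => prod_nonneg fun i _ => advWeight_nonneg hε _
  have hmass : ∑ p, P p = Fintype.card κ := by
    simp [P, Fintype.sum_prod_type, advProb_eq_prodWeight,
      sum_prodWeight fun i => sum_advWeight (hxs i)]
  have hmoment : ∑ p, P p * Y p ^ 2 = (1 - ε ^ 2) * ∑ i, ∑ j, A i j ^ 2 := by
    simp only [P, Y, Fintype.sum_prod_type, sum_advProb_mul_mulVec_error_sq A hxs, mul_sum]
  have hvar : 0 ≤ 1 - ε ^ 2 := by nlinarith [abs_nonneg ε, sq_abs ε]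
  calc _ = ∑ p, P p * |Y p| := by
        simp only [P, Y, Fintype.sum_prod_type, mul_sum]; exact sum_comm
    _ ≤ √(∑ p, P p) * √(∑ p, P p * Y p ^ 2) := Real.sum_mul_abs_le_sqrt_mul_sqrt _ hP
    _ = √(Fintype.card κ * (1 - ε ^ 2)) * √(∑ i, ∑ j, A i j ^ 2) := by
        rw [hmass, hmoment, Real.sqrt_mul hvar, Real.sqrt_mul (Nat.cast_nonneg _), mul_assoc]

end LabelAdviceError

/-- Let `A` be a real `n × n` matrix, `ε ∈ [0, 1]`, `x* ∈ {-1, 1}^n`, and let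
`x̃` be the random label advice (mutually independent coordinates, each correct with probability
`(1 + ε)/2`).  Then `E[‖A (ε x* - x̃)‖₁] ≤ √(n (1 - ε²)) ‖A‖_F`, and in particular
`E[‖A (ε x* - x̃)‖₁] ≤ √n ‖A‖_F`. -/
theorem expected_l1_norm_advice_error_le
    (n : ℕ) (A : Matrix (Fin n) (Fin n) ℝ)
    (ε : ℝ) (hε : ε ∈ Set.Icc (0 : ℝ) 1)
    (xstar : Fin n → ℝ) (hxs : ∀ i, xstar i = 1 ∨ xstar i = -1) :
    (∑ s : Fin n → Bool, advProb ε xstar s *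
        ∑ i, |A.mulVec (fun j => ε * xstar j - sg (s j)) i|)
      ≤ Real.sqrt (n * (1 - ε ^ 2)) * Real.sqrt (∑ i, ∑ j, (A i j) ^ 2) ∧
    (∑ s : Fin n → Bool, advProb ε xstar s *
        ∑ i, |A.mulVec (fun j => ε * xstar j - sg (s j)) i|)
      ≤ Real.sqrt n * Real.sqrt (∑ i, ∑ j, (A i j) ^ 2) := by
  have hbound := sum_advProb_mul_norm_mulVec_error_le A hxs
    (abs_le.2 ⟨by linarith [hε.1], hε.2⟩)
  rw [Fintype.card_fin] at hbound
  refine ⟨hbound, hbound.trans ?_⟩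
  gcongr
  nlinarith [sq_nonneg ε]
end

section
/- Let A be a symmetric real n×n matrix, let ε ∈ (0,1], let x* ∈ {−1,1}^n, and let x̃ = (x̃₁,…,x̃ₙ) be mutually independent {−1,1}-valued random variables with Pr(x̃ᵢ = xᵢ*) = (1+ε)/2 for each i. Define F(x,y) := ⟨x, Ay⟩ − ‖A(εx − y)‖₁. Then E_{x̃}[ sup_{x ∈ [−1,1]^n} F(x, x̃) ] ≥ ε⟨x*, Ax*⟩ − √n · ‖A‖_F. -/
open Finset

/-- The objective `F(x, y) := ⟨x, A y⟩ - ‖A (ε x - y)‖₁` of the concave program. -/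
noncomputable def Fobj {n : ℕ} (A : Matrix (Fin n) (Fin n) ℝ) (ε : ℝ)
    (x y : Fin n → ℝ) : ℝ :=
  (∑ i, x i * A.mulVec y i) - ∑ i, |A.mulVec (fun j => ε * x j - y j) i|

noncomputable def pf (ε : ℝ) (xs : ℝ) (b : Bool) : ℝ :=
  if sg b = xs then (1 + ε) / 2 else (1 - ε) / 2

section Aux

variable {n : ℕ} (ε : ℝ) (xstar : Fin n → ℝ)

lemma advProb_eq_pf (s : Fin n → Bool) :
    advProb ε xstar s = ∏ i, pf ε (xstar i) (s i) := rfl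

lemma sum_prod_bool (h : Fin n → Bool → ℝ) :
    ∑ s : Fin n → Bool, ∏ i, h i (s i) = ∏ i, (h i true + h i false) := by
  have : ∀ i, h i true + h i false = ∑ b : Bool, h i b := by
    intro i; rw [Fintype.sum_bool]
  simp only [this]
  rw [Finset.prod_univ_sum, Fintype.piFinset_univ]

lemma exp_prod (g : Fin n → Bool → ℝ) :
    ∑ s : Fin n → Bool, advProb ε xstar s * ∏ i, g i (s i)
      = ∏ i, (pf ε (xstar i) true * g i true + pf ε (xstar i) false * g i false) := by
  have h1 : ∀ s : Fin n → Bool, advProb ε xstar s * ∏ i, g i (s i)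
      = ∏ i, (pf ε (xstar i) (s i) * g i (s i)) := by
    intro s; rw [advProb_eq_pf, ← Finset.prod_mul_distrib]
  simp only [h1]
  exact sum_prod_bool (fun i b => pf ε (xstar i) b * g i b)

variable {ε xstar}
variable (hε : ε ∈ Set.Ioc (0 : ℝ) 1) (hxs : ∀ i, xstar i = 1 ∨ xstar i = -1)
include hε in
lemma pf_nonneg (x : ℝ) (b : Bool) : 0 ≤ pf ε x b := by
  obtain ⟨h1, h2⟩ := hε
  unfold pf; split <;> linarith

include hε in
lemma advProb_nonneg (s : Fin n → Bool) : 0 ≤ advProb ε xstar s :=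
  Finset.prod_nonneg fun i _ => by
    rw [show (if sg (s i) = xstar i then (1+ε)/2 else (1-ε)/2) = pf ε (xstar i) (s i) from rfl]
    exact pf_nonneg hε _ _

include hxs in
lemma pf_sum (i : Fin n) : pf ε (xstar i) true + pf ε (xstar i) false = 1 := by
  rcases hxs i with h | h <;> rw [h] <;> norm_num [pf, sg] <;> ring

include hxs in
lemma pf_lin (i : Fin n) :
    pf ε (xstar i) true * sg true + pf ε (xstar i) false * sg false = ε * xstar i := by
  rcases hxs i with h | h <;> rw [h] <;> norm_num [pf, sg] <;> ring

include hxs in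
lemma pf_z (i : Fin n) :
    pf ε (xstar i) true * (ε * xstar i - sg true)
      + pf ε (xstar i) false * (ε * xstar i - sg false) = 0 := by
  rcases hxs i with h | h <;> rw [h] <;> norm_num [pf, sg] <;> ring

include hxs in
lemma pf_sq (i : Fin n) :
    pf ε (xstar i) true * (ε * xstar i - sg true) ^ 2
      + pf ε (xstar i) false * (ε * xstar i - sg false) ^ 2 = 1 - ε ^ 2 := by
  rcases hxs i with h | h <;> rw [h] <;> norm_num [pf, sg] <;> ring

include hxs in
lemma moment_zero : ∑ s : Fin n → Bool, advProb ε xstar s = 1 := by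
  have h := exp_prod ε xstar (fun _ _ => (1 : ℝ))
  simp only [mul_one, Finset.prod_const_one] at h
  rw [h]
  rw [Finset.prod_congr rfl fun i _ => pf_sum hxs i, Finset.prod_const_one]

include hxs in
lemma moment_one (j : Fin n) :
    ∑ s : Fin n → Bool, advProb ε xstar s * sg (s j) = ε * xstar j := by
  have h := exp_prod ε xstar (fun i b => if i = j then sg b else 1)
  have h2 : ∀ s : Fin n → Bool, (∏ i, if i = j then sg (s i) else 1) = sg (s j) := by
    intro s
    rw [Finset.prod_ite_eq' univ j (fun i => sg (s i))]
    simp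
  simp only [h2] at h
  rw [h]
  have h3 : ∀ i : Fin n,
      (pf ε (xstar i) true * (if i = j then sg true else 1)
        + pf ε (xstar i) false * (if i = j then sg false else 1))
      = if i = j then ε * xstar i else 1 := by
    intro i
    by_cases hij : i = j <;> simp [hij]
    · exact pf_lin hxs j
    · exact pf_sum hxs i
  rw [Finset.prod_congr rfl fun i _ => h3 i, Finset.prod_ite_eq' univ j (fun i => ε * xstar i)]
  simp

include hxs in
lemma cov_diag (j : Fin n) :
    ∑ s : Fin n → Bool, advProb ε xstar s * (ε * xstar j - sg (s j)) ^ 2 = 1 - ε ^ 2 := by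
  have h := exp_prod ε xstar (fun i b => if i = j then (ε * xstar i - sg b) ^ 2 else 1)
  have h2 : ∀ s : Fin n → Bool,
      (∏ i, if i = j then (ε * xstar i - sg (s i)) ^ 2 else 1)
        = (ε * xstar j - sg (s j)) ^ 2 := by
    intro s
    rw [Finset.prod_ite_eq' univ j (fun i => (ε * xstar i - sg (s i)) ^ 2)]
    simp
  simp only [h2] at h
  rw [h]
  have h3 : ∀ i : Fin n,
      (pf ε (xstar i) true * (if i = j then (ε * xstar i - sg true) ^ 2 else 1)
        + pf ε (xstar i) false * (if i = j then (ε * xstar i - sg false) ^ 2 else 1))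
      = if i = j then 1 - ε ^ 2 else 1 := by
    intro i
    by_cases hij : i = j <;> simp [hij]
    · exact pf_sq hxs j
    · exact pf_sum hxs i
  rw [Finset.prod_congr rfl fun i _ => h3 i, Finset.prod_ite_eq' univ j (fun _ => 1 - ε ^ 2)]
  simp

include hxs in
lemma cov_off {j k : Fin n} (hjk : j ≠ k) :
    ∑ s : Fin n → Bool, advProb ε xstar s *
      ((ε * xstar j - sg (s j)) * (ε * xstar k - sg (s k))) = 0 := by
  have h := exp_prod ε xstar
    (fun i b => (if i = j then ε * xstar i - sg b else 1) * (if i = k then ε * xstar i - sg b else 1))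
  have h2 : ∀ s : Fin n → Bool,
      (∏ i, (if i = j then ε * xstar i - sg (s i) else 1)
          * (if i = k then ε * xstar i - sg (s i) else 1))
        = (ε * xstar j - sg (s j)) * (ε * xstar k - sg (s k)) := by
    intro s
    rw [Finset.prod_mul_distrib,
      Finset.prod_ite_eq' univ j (fun i => ε * xstar i - sg (s i)),
      Finset.prod_ite_eq' univ k (fun i => ε * xstar i - sg (s i))]
    simp
  simp only [h2] at h
  rw [h]
  apply Finset.prod_eq_zero (Finset.mem_univ j)
  simp only [if_pos rfl, if_neg hjk]
  rw [mul_one, mul_one]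
  exact pf_z hxs j

end Aux

/-- Let `A` be a symmetric real `n × n` matrix, `ε ∈ (0, 1]`, `x* ∈ {-1, 1}^n`,
and let `x̃` be the random label advice.  With `F(x, y) := ⟨x, A y⟩ - ‖A (ε x - y)‖₁`,
`E[sup_{x ∈ [-1,1]^n} F(x, x̃)] ≥ ε ⟨x*, A x*⟩ - √n ‖A‖_F`. -/
theorem expected_sup_F_ge
    (n : ℕ) (A : Matrix (Fin n) (Fin n) ℝ) (hA : A.IsSymm)
    (ε : ℝ) (hε : ε ∈ Set.Ioc (0 : ℝ) 1)
    (xstar : Fin n → ℝ) (hxs : ∀ i, xstar i = 1 ∨ xstar i = -1) :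
    (∑ s : Fin n → Bool, advProb ε xstar s *
        sSup ((fun x : Fin n → ℝ => Fobj A ε x (fun i => sg (s i))) ''
          {x | ∀ i, x i ∈ Set.Icc (-1 : ℝ) 1}))
      ≥ ε * (∑ i, xstar i * A.mulVec xstar i)
          - Real.sqrt n * Real.sqrt (∑ i, ∑ j, (A i j) ^ 2) := by

  have hp0 : ∀ s : Fin n → Bool, 0 ≤ advProb ε xstar s := fun s => advProb_nonneg hε s
  have hmem : xstar ∈ {x : Fin n → ℝ | ∀ i, x i ∈ Set.Icc (-1 : ℝ) 1} := by
    intro i; rcases hxs i with h | h <;> rw [h] <;> constructor <;> norm_num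
  have hbdd : ∀ y : Fin n → ℝ, BddAbove ((fun x : Fin n → ℝ => Fobj A ε x y) ''
      {x | ∀ i, x i ∈ Set.Icc (-1 : ℝ) 1}) := by
    intro y
    refine ⟨∑ i, |A.mulVec y i|, ?_⟩
    rintro v ⟨x, hx, rfl⟩
    have h1 : ∑ i, x i * A.mulVec y i ≤ ∑ i, |A.mulVec y i| := by
      refine Finset.sum_le_sum fun i _ => ?_
      calc x i * A.mulVec y i ≤ |x i * A.mulVec y i| := le_abs_self _
        _ = |x i| * |A.mulVec y i| := abs_mul _ _
        _ ≤ 1 * |A.mulVec y i| := by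
            refine mul_le_mul_of_nonneg_right ?_ (abs_nonneg _)
            exact abs_le.mpr ⟨(hx i).1, (hx i).2⟩
        _ = |A.mulVec y i| := one_mul _
    have h2 : 0 ≤ ∑ i, |A.mulVec (fun j => ε * x j - y j) i| :=
      Finset.sum_nonneg fun i _ => abs_nonneg _
    simp only [Fobj]
    linarith
  have hsup : ∀ s : Fin n → Bool,
      Fobj A ε xstar (fun i => sg (s i)) ≤
        sSup ((fun x : Fin n → ℝ => Fobj A ε x (fun i => sg (s i))) ''
          {x | ∀ i, x i ∈ Set.Icc (-1 : ℝ) 1}) := fun s =>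
    le_csSup (hbdd _) ⟨xstar, hmem, rfl⟩
  have step2 : ∑ s : Fin n → Bool, advProb ε xstar s * Fobj A ε xstar (fun i => sg (s i)) ≤
      ∑ s : Fin n → Bool, advProb ε xstar s *
        sSup ((fun x : Fin n → ℝ => Fobj A ε x (fun i => sg (s i))) ''
          {x | ∀ i, x i ∈ Set.Icc (-1 : ℝ) 1}) :=
    Finset.sum_le_sum fun s _ => mul_le_mul_of_nonneg_left (hsup s) (hp0 s)
  -- first moment term
  have hT1 : ∑ s : Fin n → Bool,
      advProb ε xstar s * ∑ i, xstar i * A.mulVec (fun j => sg (s j)) i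
      = ε * ∑ i, xstar i * A.mulVec xstar i := by
    have e1 : ∀ s : Fin n → Bool,
        advProb ε xstar s * ∑ i, xstar i * A.mulVec (fun j => sg (s j)) i
        = ∑ i, ∑ j, (xstar i * A i j) * (advProb ε xstar s * sg (s j)) := by
      intro s
      simp only [Matrix.mulVec, dotProduct, Finset.mul_sum]
      exact Finset.sum_congr rfl fun i _ => Finset.sum_congr rfl fun j _ => by ring
    rw [Finset.sum_congr rfl fun s _ => e1 s, Finset.sum_comm]
    have e2 : ∀ i : Fin n,
        ∑ s : Fin n → Bool, ∑ j, (xstar i * A i j) * (advProb ε xstar s * sg (s j))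
        = ∑ j, (xstar i * A i j) * (ε * xstar j) := by
      intro i
      rw [Finset.sum_comm]
      refine Finset.sum_congr rfl fun j _ => ?_
      rw [← Finset.mul_sum, moment_one hxs j]
    rw [Finset.sum_congr rfl fun i _ => e2 i, Finset.mul_sum]
    refine Finset.sum_congr rfl fun i _ => ?_
    simp only [Matrix.mulVec, dotProduct, Finset.mul_sum]
    exact Finset.sum_congr rfl fun j _ => by ring
  -- second (error) term
  have hT2 : ∑ s : Fin n → Bool,
      advProb ε xstar s * ∑ i, |A.mulVec (fun j => ε * xstar j - sg (s j)) i|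
      ≤ Real.sqrt n * Real.sqrt (∑ i, ∑ j, (A i j) ^ 2) := by
    have swap : ∑ s : Fin n → Bool,
        advProb ε xstar s * ∑ i, |A.mulVec (fun j => ε * xstar j - sg (s j)) i|
        = ∑ i, ∑ s : Fin n → Bool,
            advProb ε xstar s * |A.mulVec (fun j => ε * xstar j - sg (s j)) i| := by
      simp only [Finset.mul_sum]; exact Finset.sum_comm
    have hV : ∀ i, ∑ s : Fin n → Bool,
        advProb ε xstar s * (A.mulVec (fun j => ε * xstar j - sg (s j)) i) ^ 2
        = (1 - ε ^ 2) * ∑ j, A i j ^ 2 := by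
      intro i
      have e1 : ∀ s : Fin n → Bool,
          advProb ε xstar s * (A.mulVec (fun j => ε * xstar j - sg (s j)) i) ^ 2
          = ∑ j, ∑ k, (A i j * A i k) *
              (advProb ε xstar s * ((ε * xstar j - sg (s j)) * (ε * xstar k - sg (s k)))) := by
        intro s
        simp only [Matrix.mulVec, dotProduct]
        rw [sq, Finset.sum_mul_sum, Finset.mul_sum]
        refine Finset.sum_congr rfl fun j _ => ?_
        rw [Finset.mul_sum]
        exact Finset.sum_congr rfl fun k _ => by ring
      rw [Finset.sum_congr rfl fun s _ => e1 s, Finset.sum_comm]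
      have e2 : ∀ j : Fin n, ∑ s : Fin n → Bool, ∑ k, (A i j * A i k) *
            (advProb ε xstar s * ((ε * xstar j - sg (s j)) * (ε * xstar k - sg (s k))))
          = (1 - ε ^ 2) * A i j ^ 2 := by
        intro j
        rw [Finset.sum_comm]
        have e3 : ∀ k : Fin n, ∑ s : Fin n → Bool, (A i j * A i k) *
              (advProb ε xstar s * ((ε * xstar j - sg (s j)) * (ε * xstar k - sg (s k))))
            = if k = j then (1 - ε ^ 2) * A i j ^ 2 else 0 := by
          intro k
          rw [← Finset.mul_sum]
          by_cases hkj : k = j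
          · subst hkj
            have hh : ∀ s : Fin n → Bool,
                advProb ε xstar s * ((ε * xstar k - sg (s k)) * (ε * xstar k - sg (s k)))
                = advProb ε xstar s * (ε * xstar k - sg (s k)) ^ 2 := by
              intro s; ring
            rw [Finset.sum_congr rfl fun s _ => hh s, cov_diag hxs k, if_pos rfl]
            ring
          · have hjk : j ≠ k := fun h => hkj h.symm
            rw [cov_off hxs hjk, mul_zero, if_neg hkj]
        rw [Finset.sum_congr rfl fun k _ => e3 k,
          Finset.sum_ite_eq' univ j (fun _ => (1 - ε ^ 2) * A i j ^ 2)]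
        simp
      rw [Finset.sum_congr rfl fun j _ => e2 j, ← Finset.mul_sum]
    have hE : ∀ i, ∑ s : Fin n → Bool,
        advProb ε xstar s * |A.mulVec (fun j => ε * xstar j - sg (s j)) i|
        ≤ Real.sqrt (∑ j, A i j ^ 2) := by
      intro i
      set E := ∑ s : Fin n → Bool,
        advProb ε xstar s * |A.mulVec (fun j => ε * xstar j - sg (s j)) i| with hEdef
      have hr0 : 0 ≤ ∑ j, A i j ^ 2 := Finset.sum_nonneg fun j _ => sq_nonneg _
      have hE0 : 0 ≤ E :=
        Finset.sum_nonneg fun s _ => mul_nonneg (hp0 s) (abs_nonneg _)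
      have cs := Finset.sum_mul_sq_le_sq_mul_sq univ
        (fun s : Fin n → Bool => Real.sqrt (advProb ε xstar s))
        (fun s : Fin n → Bool => Real.sqrt (advProb ε xstar s) *
          |A.mulVec (fun j => ε * xstar j - sg (s j)) i|)
      have l1 : ∀ s : Fin n → Bool, Real.sqrt (advProb ε xstar s) *
          (Real.sqrt (advProb ε xstar s) * |A.mulVec (fun j => ε * xstar j - sg (s j)) i|)
          = advProb ε xstar s * |A.mulVec (fun j => ε * xstar j - sg (s j)) i| := by
        intro s; rw [← mul_assoc, Real.mul_self_sqrt (hp0 s)]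
      have l2 : ∀ s : Fin n → Bool, Real.sqrt (advProb ε xstar s) ^ 2 = advProb ε xstar s :=
        fun s => Real.sq_sqrt (hp0 s)
      have l3 : ∀ s : Fin n → Bool, (Real.sqrt (advProb ε xstar s) *
          |A.mulVec (fun j => ε * xstar j - sg (s j)) i|) ^ 2
          = advProb ε xstar s * (A.mulVec (fun j => ε * xstar j - sg (s j)) i) ^ 2 := by
        intro s; rw [mul_pow, Real.sq_sqrt (hp0 s), sq_abs]
      rw [Finset.sum_congr rfl fun s _ => l1 s, Finset.sum_congr rfl fun s _ => l2 s,
        Finset.sum_congr rfl fun s _ => l3 s, moment_zero hxs, one_mul, hV i] at cs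
      have hE2 : E ^ 2 ≤ ∑ j, A i j ^ 2 := by
        have hε0 := hε.1
        nlinarith [sq_nonneg ε, mul_nonneg (sq_nonneg ε) hr0]
      calc E = Real.sqrt (E ^ 2) := (Real.sqrt_sq hE0).symm
        _ ≤ Real.sqrt (∑ j, A i j ^ 2) := Real.sqrt_le_sqrt hE2
    rw [swap]
    have last : ∑ i, Real.sqrt (∑ j, A i j ^ 2)
        ≤ Real.sqrt n * Real.sqrt (∑ i, ∑ j, (A i j) ^ 2) := by
      have cs2 := Finset.sum_mul_sq_le_sq_mul_sq univ (fun _ : Fin n => (1 : ℝ))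
        (fun i => Real.sqrt (∑ j, A i j ^ 2))
      simp only [one_pow, one_mul, Finset.sum_const, card_univ, Fintype.card_fin,
        nsmul_eq_mul, mul_one] at cs2
      have l4 : ∀ i : Fin n, Real.sqrt (∑ j, A i j ^ 2) ^ 2 = ∑ j, A i j ^ 2 :=
        fun i => Real.sq_sqrt (Finset.sum_nonneg fun j _ => sq_nonneg _)
      rw [Finset.sum_congr rfl fun i _ => l4 i] at cs2
      have h0 : 0 ≤ ∑ i, Real.sqrt (∑ j, A i j ^ 2) :=
        Finset.sum_nonneg fun i _ => Real.sqrt_nonneg _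
      calc ∑ i, Real.sqrt (∑ j, A i j ^ 2)
          = Real.sqrt ((∑ i, Real.sqrt (∑ j, A i j ^ 2)) ^ 2) := (Real.sqrt_sq h0).symm
        _ ≤ Real.sqrt ((n : ℝ) * ∑ i, ∑ j, A i j ^ 2) := Real.sqrt_le_sqrt cs2
        _ = Real.sqrt n * Real.sqrt (∑ i, ∑ j, (A i j) ^ 2) :=
            Real.sqrt_mul (Nat.cast_nonneg n) _
    exact le_trans (Finset.sum_le_sum fun i _ => hE i) last
  -- combine
  rw [ge_iff_le]
  refine le_trans ?_ step2
  have expand : ∑ s : Fin n → Bool, advProb ε xstar s * Fobj A ε xstar (fun i => sg (s i))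
      = (∑ s : Fin n → Bool,
          advProb ε xstar s * ∑ i, xstar i * A.mulVec (fun j => sg (s j)) i)
        - ∑ s : Fin n → Bool,
            advProb ε xstar s * ∑ i, |A.mulVec (fun j => ε * xstar j - sg (s j)) i| := by
    rw [← Finset.sum_sub_distrib]
    refine Finset.sum_congr rfl fun s _ => ?_
    rw [← mul_sub]
    rfl
  rw [expand, hT1]
  linarith
end

section
/- Let A be a symmetric real n×n matrix with zero diagonal entries. Then for every x ∈ [−1,1]^n there exists x' ∈ {−1,1}^n such that ⟨x', Ax'⟩ ≥ ⟨x, Ax⟩. -/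
open Finset


lemma quad_update (n : ℕ) (A : Matrix (Fin n) (Fin n) ℝ)
    (hdiag : ∀ i, A i i = 0) (x : Fin n → ℝ) (i : Fin n) (t : ℝ) :
    ∑ j, (Function.update x i t) j * A.mulVec (Function.update x i t) j
      = (∑ j ∈ univ.erase i, x j * ∑ k ∈ univ.erase i, A j k * x k)
        + t * ((∑ k ∈ univ.erase i, A i k * x k)
               + ∑ j ∈ univ.erase i, x j * A j i) := by
  simp only [Matrix.mulVec, dotProduct]
  rw [← Finset.add_sum_erase _ _ (mem_univ i)]
  have h1 : ∀ j ∈ univ.erase i, Function.update x i t j = x j := fun j hj =>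
    Function.update_of_ne (Finset.ne_of_mem_erase hj) _ _
  have hinner : ∀ j, (∑ k, A j k * Function.update x i t k)
      = A j i * t + ∑ k ∈ univ.erase i, A j k * x k := by
    intro j
    rw [← Finset.add_sum_erase _ _ (mem_univ i)]
    simp only [Function.update_self]
    congr 1
    exact Finset.sum_congr rfl fun k hk => by rw [h1 k hk]
  have hmain : ∑ j ∈ univ.erase i, Function.update x i t j * ∑ k, A j k * Function.update x i t k
      = ∑ j ∈ univ.erase i, (x j * (A j i * t) + x j * ∑ k ∈ univ.erase i, A j k * x k) :=
    Finset.sum_congr rfl fun j hj => by rw [h1 j hj, hinner j]; ring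
  rw [hmain, Function.update_self, hinner i, hdiag i, Finset.sum_add_distrib]
  have h2 : ∑ j ∈ univ.erase i, x j * (A j i * t) = t * ∑ j ∈ univ.erase i, x j * A j i := by
    rw [Finset.mul_sum]; exact Finset.sum_congr rfl fun j _ => by ring
  rw [h2]; ring

lemma round_aux (n : ℕ) (A : Matrix (Fin n) (Fin n) ℝ) (hdiag : ∀ i, A i i = 0)
    (s : Finset (Fin n)) :
    ∀ x : Fin n → ℝ, (∀ i, x i ∈ Set.Icc (-1 : ℝ) 1) →
      (∀ i ∉ s, x i = 1 ∨ x i = -1) →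
      ∃ x' : Fin n → ℝ, (∀ i, x' i = 1 ∨ x' i = -1) ∧
        (∑ i, x' i * A.mulVec x' i) ≥ ∑ i, x i * A.mulVec x i := by
  induction s using Finset.induction_on with
  | empty =>
    intro x hx hs
    exact ⟨x, fun i => hs i (by simp), le_refl _⟩
  | @insert a s ha ih =>
    intro x hx hs
    set D : ℝ := (∑ k ∈ univ.erase a, A a k * x k) + ∑ j ∈ univ.erase a, x j * A j a with hD
    set C : ℝ := ∑ j ∈ univ.erase a, x j * ∑ k ∈ univ.erase a, A j k * x k with hC
    set t : ℝ := if 0 ≤ D then 1 else -1 with ht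
    have ht1 : t = 1 ∨ t = -1 := by unfold t; split <;> simp
    have hxa := hx a
    have hkey : x a * D ≤ t * D := by
      unfold t
      rcases hxa with ⟨h1, h2⟩
      split
      · nlinarith
      · nlinarith
    have hup : x = Function.update x a (x a) := by simp
    have hge : (∑ i, (Function.update x a t) i * A.mulVec (Function.update x a t) i)
        ≥ ∑ i, x i * A.mulVec x i := by
      conv_lhs => rw [quad_update n A hdiag x a t]
      conv_rhs => rw [hup, quad_update n A hdiag x a (x a)]
      simp only [← hC, ← hD]
      linarith
    have hx' : ∀ i, Function.update x a t i ∈ Set.Icc (-1 : ℝ) 1 := by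
      intro i
      rcases eq_or_ne i a with rfl | h
      · rw [Function.update_self]
        rcases ht1 with h | h <;> rw [h] <;> constructor <;> norm_num
      · rw [Function.update_of_ne h]; exact hx i
    have hs' : ∀ i ∉ s, Function.update x a t i = 1 ∨ Function.update x a t i = -1 := by
      intro i hi
      rcases eq_or_ne i a with rfl | h
      · rw [Function.update_self]; exact ht1
      · rw [Function.update_of_ne h]
        exact hs i (by simp [hi, h])
    obtain ⟨x', hx'1, hx'2⟩ := ih (Function.update x a t) hx' hs'
    exact ⟨x', hx'1, le_trans hge hx'2⟩

/-- Let `A` be a symmetric real `n × n` matrix with zero diagonal.  Then every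
fractional vector `x ∈ [-1, 1]^n` can be rounded to a vertex `x' ∈ {-1, 1}^n` of the hypercube
without decreasing the quadratic form: `⟨x', A x'⟩ ≥ ⟨x, A x⟩`. -/
theorem exists_hypercube_rounding
    (n : ℕ) (A : Matrix (Fin n) (Fin n) ℝ) (hA : A.IsSymm)
    (hdiag : ∀ i, A i i = 0)
    (x : Fin n → ℝ) (hx : ∀ i, x i ∈ Set.Icc (-1 : ℝ) 1) :
    ∃ x' : Fin n → ℝ, (∀ i, x' i = 1 ∨ x' i = -1) ∧
      (∑ i, x' i * A.mulVec x' i) ≥ ∑ i, x i * A.mulVec x i := by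
  exact round_aux n A hdiag univ x hx (fun i hi => absurd (mem_univ i) hi)
end

section
/- Let K be a nonempty finite index set, and for each k ∈ K let c_k ∈ {−1,1} and x_k* ∈ {−1,1} be such that c_k x_k* = 1 for at least (3/4)|K| indices k. Let ε ∈ (0,1] and let (x̃_k)_{k∈K} be mutually independent {−1,1}-valued random variables with Pr(x̃_k = x_k*) = (1+ε)/2. Then Pr( Σ_{k∈K} c_k x̃_k ≤ 0 ) ≤ exp(−ε²|K|/8). -/
open Finset

/-!
The weights `advProb ε xstar` are those of the product of the one-coordinate advice laws, under
which the summands `c k * x̃ k` are independent, `[-1, 1]`-valued, with means `ε * c k * xstar k`.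
The majority hypothesis makes the total mean at least `ε |K| / 2`, so the event `∑ c k x̃ k ≤ 0`
is a deviation of `ε |K| / 2` below the mean, which Hoeffding's inequality bounds by
`exp (-2 (ε |K| / 2)² / (4 |K|)) = exp (-ε² |K| / 8)`.
-/

open MeasureTheory ProbabilityTheory Real

theorem measureReal_pi_sum_le_sum_integral_sub_le {ι : Type*} [Fintype ι] {Ω : ι → Type*}
    [∀ i, MeasurableSpace (Ω i)] (ν : ∀ i, Measure (Ω i)) [∀ i, IsProbabilityMeasure (ν i)]
    {f : ∀ i, Ω i → ℝ} (hf : ∀ i, Measurable (f i)) {a b : ℝ}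
    (hfab : ∀ i x, f i x ∈ Set.Icc a b) {t : ℝ} (ht : 0 ≤ t) :
    (Measure.pi ν).real {ω | ∑ i, f i (ω i) ≤ ∑ i, ∫ x, f i x ∂ν i - t}
      ≤ exp (-2 * t ^ 2 / (Fintype.card ι * (b - a) ^ 2)) := by
  set X : ι → (∀ i, Ω i) → ℝ := fun i ω => ∫ x, f i x ∂ν i - f i (ω i)
  have hindep : iIndepFun X (Measure.pi ν) :=
    iIndepFun_pi (X := fun i x => ∫ x, f i x ∂ν i - f i x) fun i => by fun_prop
  have hsubG : ∀ i ∈ (univ : Finset ι),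
      HasSubgaussianMGF (X i) ((‖b - a‖₊ / 2) ^ 2) (Measure.pi ν) := by
    intro i _
    have h := hasSubgaussianMGF_of_mem_Icc (X := fun ω : (∀ i, Ω i) => -f i (ω i))
      (μ := Measure.pi ν) (a := -b) (b := -a)
      ((hf i).comp (measurable_pi_apply i)).neg.aemeasurable
      (ae_of_all _ fun ω => ⟨neg_le_neg (hfab i (ω i)).2, neg_le_neg (hfab i (ω i)).1⟩)
    rw [integral_neg, integral_comp_eval (hf i).aestronglyMeasurable,
      show -a - -b = b - a by ring] at h
    exact h.congr (ae_of_all _ fun ω => by simp only [X]; ring)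
  convert HasSubgaussianMGF.measure_sum_ge_le_of_iIndepFun hindep hsubG ht using 2
  · ext ω
    simp only [X, Set.mem_ofPred_eq, Finset.sum_sub_distrib]
    constructor <;> intro h <;> linarith
  · simp only [Finset.sum_const, Finset.card_univ, nsmul_eq_mul, NNReal.coe_mul,
      NNReal.coe_natCast, NNReal.coe_pow, NNReal.coe_div, coe_nnnorm, NNReal.coe_ofNat,
      Real.norm_eq_abs, div_pow, sq_abs]
    rw [show 2 * (Fintype.card ι * ((b - a) ^ 2 / 2 ^ 2)) = Fintype.card ι * (b - a) ^ 2 / 2 by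
      ring, div_div_eq_mul_div]
    ring

theorem measureReal_pi_singleton {ι : Type*} [Fintype ι] {Ω : ι → Type*}
    [∀ i, MeasurableSpace (Ω i)] (ν : ∀ i, Measure (Ω i)) [∀ i, IsFiniteMeasure (ν i)]
    (ω : ∀ i, Ω i) : (Measure.pi ν).real {ω} = ∏ i, (ν i).real {ω i} := by
  simp only [measureReal_def, Measure.pi_singleton, ENNReal.toReal_prod]

theorem sum_measureReal_singleton_mul_ite {Ω : Type*} [Fintype Ω] [MeasurableSpace Ω]
    [MeasurableSingletonClass Ω] (μ : Measure Ω) [IsFiniteMeasure μ] (p : Ω → Prop)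
    [DecidablePred p] :
    ∑ ω, μ.real {ω} * (if p ω then 1 else 0) = μ.real {ω | p ω} := by
  simp only [mul_ite, mul_one, mul_zero, ← Finset.sum_filter, sum_measureReal_singleton,
    Finset.coe_filter, Finset.mem_univ, true_and]

/-- The bias is clamped to `[0, 1]`, so this is a probability measure for all `ε` and `x`; when
`|ε * x| ≤ 1` it gives mass `(1 + ε x) / 2` to `true`, i.e. `sg` has mean `ε x`. -/
noncomputable def labelAdvice (ε x : ℝ) : Measure Bool :=
  Ber(true, false, Set.projIcc 0 1 zero_le_one ((1 + ε * x) / 2))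

instance (ε x : ℝ) : IsProbabilityMeasure (labelAdvice ε x) := by
  unfold labelAdvice; infer_instance

theorem labelAdvice_real_singleton {ε x : ℝ} (h : |ε * x| ≤ 1) (b : Bool) :
    (labelAdvice ε x).real {b} = (1 + ε * x * sg b) / 2 := by
  have := abs_le.mp h
  rw [labelAdvice, Set.projIcc_of_mem _ ⟨by linarith, by linarith⟩]
  cases b
  · rw [bernoulliMeasure_real_apply_of_notMem_of_mem _ (measurableSet_singleton _) (by simp)
      (by simp)]
    simp only [sg, Bool.false_eq_true, if_false]
    ring
  · rw [bernoulliMeasure_real_apply_of_mem_of_notMem _ (measurableSet_singleton _) (by simp)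
      (by simp)]
    simp only [sg, if_true, mul_one]

theorem integral_sg_labelAdvice {ε x : ℝ} (h : |ε * x| ≤ 1) :
    ∫ b, sg b ∂labelAdvice ε x = ε * x := by
  have := abs_le.mp h
  rw [labelAdvice, integral_bernoulliMeasure, Set.projIcc_of_mem _ ⟨by linarith, by linarith⟩]
  simp only [sg, if_true, Bool.false_eq_true, if_false, smul_eq_mul]
  ring

theorem advProb_eq_measureReal_pi {ι : Type*} [Fintype ι] {ε : ℝ} {xs : ι → ℝ} (hε : |ε| ≤ 1)
    (hxs : ∀ i, xs i = 1 ∨ xs i = -1) (s : ι → Bool) :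
    advProb ε xs s = (Measure.pi fun i => labelAdvice ε (xs i)).real {s} := by
  rw [measureReal_pi_singleton]
  refine Finset.prod_congr rfl fun i _ => ?_
  rcases hxs i with h | h <;>
    rw [labelAdvice_real_singleton (by simpa [h] using hε)] <;> cases s i <;> norm_num [sg, h] <;>
    ring

theorem two_mul_card_filter_eq_one_sub_card_le_sum {K : Type*} [Fintype K] (y : K → ℝ)
    (hy : ∀ k, -1 ≤ y k) :
    2 * (#{k | y k = 1} : ℝ) - Fintype.card K ≤ ∑ k, y k :=
  calc 2 * (#{k | y k = 1} : ℝ) - Fintype.card K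
      = ∑ k, (2 * (if y k = 1 then 1 else 0) - 1) := by
        simp only [Finset.sum_sub_distrib, ← Finset.mul_sum, Finset.sum_boole, Finset.sum_const,
          Finset.card_univ, nsmul_eq_mul, mul_one]
    _ ≤ ∑ k, y k := Finset.sum_le_sum fun k _ => by split_ifs with h <;> linarith [hy k]

/-- Let `K` be a nonempty finite index set with signs `c k ∈ {-1, 1}` and
ground-truth values `x* k ∈ {-1, 1}` such that `c k * x* k = 1` for at least `(3/4)|K|` indices.
For label advice `x̃` with parameter `ε ∈ (0, 1]`,
`Pr(∑_k c k * x̃ k ≤ 0) ≤ exp(-ε² |K| / 8)`. -/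
theorem hoeffding_bound_for_heavy_sign
    (K : Type*) [Fintype K] [DecidableEq K] [Nonempty K]
    (c xstar : K → ℝ)
    (hc : ∀ k, c k = 1 ∨ c k = -1) (hxs : ∀ k, xstar k = 1 ∨ xstar k = -1)
    (hmaj : (3 / 4 : ℝ) * Fintype.card K
      ≤ ((Finset.univ.filter fun k => c k * xstar k = 1).card : ℝ))
    (ε : ℝ) (hε : ε ∈ Set.Ioc (0 : ℝ) 1) :
    (∑ s : K → Bool, advProb ε xstar s *
        (if (∑ k, c k * sg (s k)) ≤ 0 then (1 : ℝ) else 0))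
      ≤ Real.exp (-(ε ^ 2 * Fintype.card K) / 8) := by
  obtain ⟨hε0, hε1⟩ := hε
  have hε' : |ε| ≤ 1 := abs_le.mpr ⟨by linarith, hε1⟩
  have hεx : ∀ k, |ε * xstar k| ≤ 1 := fun k => by rcases hxs k with h | h <;> simpa [h]
  set ν := fun k => labelAdvice ε (xstar k)
  have hsum : (Fintype.card K : ℝ) / 2 ≤ ∑ k, c k * xstar k := by
    have := two_mul_card_filter_eq_one_sub_card_le_sum (fun k => c k * xstar k)
      (fun k => by rcases hc k with h | h <;> rcases hxs k with h' | h' <;> norm_num [h, h'])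
    linarith
  have hmean : ε * Fintype.card K / 2 ≤ ∑ k, ∫ b, c k * sg b ∂ν k := by
    simp_rw [integral_const_mul, ν, integral_sg_labelAdvice (hεx _), mul_left_comm _ ε,
      ← Finset.mul_sum]
    rw [mul_div_assoc]
    exact mul_le_mul_of_nonneg_left hsum hε0.le
  have hn : (0 : ℝ) < Fintype.card K := Nat.cast_pos.mpr Fintype.card_pos
  simp_rw [advProb_eq_measureReal_pi hε' hxs, sum_measureReal_singleton_mul_ite]
  calc (Measure.pi ν).real {s | ∑ k, c k * sg (s k) ≤ 0}
      ≤ (Measure.pi ν).real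
          {s | ∑ k, c k * sg (s k) ≤ ∑ k, ∫ b, c k * sg b ∂ν k - ε * Fintype.card K / 2} :=
        measureReal_mono (Set.ofPred_subset_ofPred.mpr fun s hs => by linarith)
    _ ≤ exp (-2 * (ε * Fintype.card K / 2) ^ 2 / (Fintype.card K * (1 - -1) ^ 2)) :=
        measureReal_pi_sum_le_sum_integral_sub_le ν (f := fun k b => c k * sg b)
          (fun k => measurable_of_finite _)
          (fun k b => by rcases hc k with h | h <;> cases b <;> norm_num [h, sg]) (by positivity)
    _ = exp (-(ε ^ 2 * Fintype.card K) / 8) := by congr 1; field_simp; ring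
end

section
/- Let K be a nonempty finite index set, and for each k ∈ K let c_k ∈ {−1,1} and x_k* ∈ {−1,1}; also fix p* ∈ {−1,1} (representing the ground-truth value xᵢ*xⱼ* of a pair of variables). Let ε ∈ (0,1], let t > 0 with |K| ≥ t, and let (x̃_k)_{k∈K} be mutually independent {−1,1}-valued random variables with Pr(x̃_k = x_k*) = (1+ε)/2. Define the random sign σ := sgn(Σ_{k∈K} c_k x̃_k) ∈ {−1,0,1}, the representative cost Cost_R := |K|·𝟙[σ ≠ p*] + #{k ∈ K : σ·c_k ≠ x_k*}, and the ground-truth cost Cost_E := #{k ∈ K : p*·x_k* ≠ c_k}. Then E[Cost_R] ≤ 8·Cost_E + 2·exp(−ε²t/8)·|K|. -/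
open Finset

lemma exp_taylor5 {x : ℝ} (h1 : |x| ≤ 1) :
    |Real.exp x - (1 + x + x^2/2 + x^3/6 + x^4/24)| ≤ |x|^5 / 100 := by
  have h := Real.exp_bound h1 (n := 5) (by norm_num)
  have hs : ∑ m ∈ Finset.range 5, x ^ m / m.factorial = 1 + x + x^2/2 + x^3/6 + x^4/24 := by
    simp [Finset.sum_range_succ, Nat.factorial]
  rw [hs] at h
  calc |Real.exp x - (1 + x + x^2/2 + x^3/6 + x^4/24)|
      ≤ |x|^5 * ((5:ℕ).succ / ((5:ℕ).factorial * 5)) := h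
    _ = |x|^5 / 100 := by norm_num [Nat.factorial]; ring

lemma goodB {ε : ℝ} (h0 : 0 ≤ ε) (h1 : ε ≤ 1) :
    (1+ε)/2 * Real.exp (-(ε/2)) + (1-ε)/2 * Real.exp (ε/2) ≤ Real.exp (-(3*ε^2/8)) := by
  have hx : |ε/2| ≤ 1 := by rw [abs_of_nonneg (by linarith)]; linarith
  have hx' : |(-(ε/2))| ≤ 1 := by rwa [abs_neg]
  have hp := abs_le.1 (exp_taylor5 hx)
  have hm := abs_le.1 (exp_taylor5 hx')
  rw [abs_of_nonneg (by linarith : (0:ℝ) ≤ ε/2)] at hp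
  rw [abs_neg, abs_of_nonneg (by linarith : (0:ℝ) ≤ ε/2)] at hm
  have e1 : Real.exp (ε/2) ≤ 1 + ε/2 + (ε/2)^2/2 + (ε/2)^3/6 + (ε/2)^4/24 + (ε/2)^5/100 := by
    linarith [hp.2]
  have e2 : Real.exp (-(ε/2)) ≤ 1 + (-(ε/2)) + (-(ε/2))^2/2 + (-(ε/2))^3/6 + (-(ε/2))^4/24 + (ε/2)^5/100 := by
    linarith [hm.2]
  have h2 : (-(3*ε^2/8)) + 1 ≤ Real.exp (-(3*ε^2/8)) := Real.add_one_le_exp _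
  nlinarith [mul_le_mul_of_nonneg_left e2 (by linarith : (0:ℝ) ≤ (1+ε)/2),
    mul_le_mul_of_nonneg_left e1 (by linarith : (0:ℝ) ≤ (1-ε)/2),
    pow_nonneg h0 4, pow_nonneg h0 5,
    mul_le_mul_of_nonneg_left h1 (pow_nonneg h0 4)]

lemma badB {ε : ℝ} (h0 : 0 ≤ ε) (h1 : ε ≤ 1) :
    (1+ε)/2 * Real.exp (ε/2) + (1-ε)/2 * Real.exp (-(ε/2)) ≤ Real.exp (5*ε^2/8) := by
  have hx : |ε/2| ≤ 1 := by rw [abs_of_nonneg (by linarith)]; linarith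
  have hx' : |(-(ε/2))| ≤ 1 := by rwa [abs_neg]
  have hp := abs_le.1 (exp_taylor5 hx)
  have hm := abs_le.1 (exp_taylor5 hx')
  rw [abs_of_nonneg (by linarith : (0:ℝ) ≤ ε/2)] at hp
  rw [abs_neg, abs_of_nonneg (by linarith : (0:ℝ) ≤ ε/2)] at hm
  have e1 : Real.exp (ε/2) ≤ 1 + ε/2 + (ε/2)^2/2 + (ε/2)^3/6 + (ε/2)^4/24 + (ε/2)^5/100 := by
    linarith [hp.2]
  have e2 : Real.exp (-(ε/2)) ≤ 1 + (-(ε/2)) + (-(ε/2))^2/2 + (-(ε/2))^3/6 + (-(ε/2))^4/24 + (ε/2)^5/100 := by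
    linarith [hm.2]
  have hsq : Real.exp (5*ε^2/8) = Real.exp (5*ε^2/16) * Real.exp (5*ε^2/16) := by
    rw [← Real.exp_add]; ring_nf
  have h2 : 5*ε^2/16 + 1 ≤ Real.exp (5*ε^2/16) := Real.add_one_le_exp _
  have h3 : (5*ε^2/16 + 1) * (5*ε^2/16 + 1) ≤ Real.exp (5*ε^2/16) * Real.exp (5*ε^2/16) := by
    have hnn : (0:ℝ) ≤ 5*ε^2/16 + 1 := by positivity
    exact mul_le_mul h2 h2 hnn (le_of_lt (Real.exp_pos _))
  rw [hsq]
  nlinarith [mul_le_mul_of_nonneg_left e1 (by linarith : (0:ℝ) ≤ (1+ε)/2),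
    mul_le_mul_of_nonneg_left e2 (by linarith : (0:ℝ) ≤ (1-ε)/2),
    pow_nonneg h0 4, pow_nonneg h0 5,
    mul_le_mul_of_nonneg_left h1 (pow_nonneg h0 4)]

set_option maxHeartbeats 2000000 in
/-- heavy-pair lemma.  Let `K` be a nonempty finite index set with signs
`c k ∈ {-1, 1}`, ground-truth values `x* k ∈ {-1, 1}`, and a ground-truth pair value
`p* ∈ {-1, 1}`.  Let `ε ∈ (0, 1]` and `0 < t ≤ |K|`, and let `x̃` be the label advice.
With `σ := sgn(∑_k c k * x̃ k) ∈ {-1, 0, 1}`, representative cost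
`Cost_R := |K| ⬝ 𝟙[σ ≠ p*] + #{k : σ * c k ≠ x* k}` and ground-truth cost
`Cost_E := #{k : p* * x* k ≠ c k}`, one has
`E[Cost_R] ≤ 8 Cost_E + 2 exp(-ε² t / 8) |K|`. -/
theorem heavy_pair_representative_cost
    (K : Type*) [Fintype K] [DecidableEq K] [Nonempty K]
    (c xstar : K → ℝ) (pstar : ℝ)
    (hc : ∀ k, c k = 1 ∨ c k = -1) (hxs : ∀ k, xstar k = 1 ∨ xstar k = -1)
    (hp : pstar = 1 ∨ pstar = -1)
    (ε : ℝ) (hε : ε ∈ Set.Ioc (0 : ℝ) 1)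
    (t : ℝ) (ht : 0 < t) (hKt : t ≤ Fintype.card K) :
    (∑ s : K → Bool, advProb ε xstar s *
        ((Fintype.card K : ℝ) *
            (if Real.sign (∑ k, c k * sg (s k)) ≠ pstar then 1 else 0)
          + ((Finset.univ.filter fun k =>
              Real.sign (∑ k', c k' * sg (s k')) * c k ≠ xstar k).card : ℝ)))
      ≤ 8 * ((Finset.univ.filter fun k => pstar * xstar k ≠ c k).card : ℝ)
          + 2 * Real.exp (-(ε ^ 2 * t) / 8) * Fintype.card K := by
  classical
  obtain ⟨hε0, hε1⟩ := hε
  have hp2 : pstar * pstar = 1 := by rcases hp with h|h <;> rw [h] <;> norm_num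
  set n : ℝ := (Fintype.card K : ℝ) with hn
  have hn0 : 0 ≤ n := by positivity
  set Bad : Finset K := Finset.univ.filter (fun k => pstar * xstar k ≠ c k) with hBadDef
  set b : ℝ := (Bad.card : ℝ) with hb
  have hb0 : 0 ≤ b := by positivity
  set w : K → Bool → ℝ := fun k u => if sg u = xstar k then (1+ε)/2 else (1-ε)/2 with hwdef
  have hw0 : ∀ k u, 0 ≤ w k u := by
    intro k u; dsimp only [w]; split <;> linarith
  have hadv : ∀ s : K → Bool, advProb ε xstar s = ∏ k, w k (s k) := fun s => rfl
  have hadv0 : ∀ s : K → Bool, 0 ≤ advProb ε xstar s := by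
    intro s; rw [hadv]; exact Finset.prod_nonneg fun k _ => hw0 k (s k)
  have hfact : ∀ F : K → Bool → ℝ,
      (∑ s : K → Bool, ∏ k, F k (s k)) = ∏ k, (F k true + F k false) := by
    intro F
    have h := Finset.sum_prod_piFinset (ι := K) (Finset.univ : Finset Bool) F
    rw [Fintype.piFinset_univ] at h
    simpa using h
  have hmass : (∑ s : K → Bool, advProb ε xstar s) = 1 := by
    simp_rw [hadv]
    rw [hfact w]
    have h1 : ∀ k ∈ (Finset.univ : Finset K), w k true + w k false = 1 := by
      intro k _
      rcases hxs k with h | h <;> norm_num [w, sg, h] <;> ring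
    rw [Finset.prod_congr rfl h1, Finset.prod_const_one]
  by_cases hcase : n ≤ 4 * b
  · -- trivial case: many bad constraints
    have hpoint : ∀ s : K → Bool,
        (n * (if Real.sign (∑ k, c k * sg (s k)) ≠ pstar then (1:ℝ) else 0)
          + ((Finset.univ.filter fun k =>
              Real.sign (∑ k', c k' * sg (s k')) * c k ≠ xstar k).card : ℝ)) ≤ 2 * n := by
      intro s
      have h1 : (if Real.sign (∑ k, c k * sg (s k)) ≠ pstar then (1:ℝ) else 0) ≤ 1 := by
        split <;> norm_num
      have h1' : (0:ℝ) ≤ (if Real.sign (∑ k, c k * sg (s k)) ≠ pstar then (1:ℝ) else 0) := by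
        split <;> norm_num
      have h2 : ((Finset.univ.filter fun k =>
          Real.sign (∑ k', c k' * sg (s k')) * c k ≠ xstar k).card : ℝ) ≤ n := by
        rw [hn]; exact_mod_cast Finset.card_filter_le _ _
      nlinarith
    refine le_trans (Finset.sum_le_sum fun s _ =>
      mul_le_mul_of_nonneg_left (hpoint s) (hadv0 s)) ?_
    rw [← Finset.sum_mul, hmass, one_mul]
    have hexp : 0 ≤ 2 * Real.exp (-(ε ^ 2 * t) / 8) * n := by positivity
    linarith
  · push_neg at hcase
    -- pointwise separation of representative cost
    have hpoint : ∀ s : K → Bool,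
        (n * (if Real.sign (∑ k, c k * sg (s k)) ≠ pstar then (1:ℝ) else 0)
          + ((Finset.univ.filter fun k =>
              Real.sign (∑ k', c k' * sg (s k')) * c k ≠ xstar k).card : ℝ))
        ≤ 2 * n * (if Real.sign (∑ k, c k * sg (s k)) ≠ pstar then (1:ℝ) else 0) + b := by
      intro s
      by_cases h : Real.sign (∑ k, c k * sg (s k)) ≠ pstar
      · rw [if_pos h]
        have h2 : ((Finset.univ.filter fun k =>
            Real.sign (∑ k', c k' * sg (s k')) * c k ≠ xstar k).card : ℝ) ≤ n := by
          rw [hn]; exact_mod_cast Finset.card_filter_le _ _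
        linarith
      · rw [if_neg h]
        push_neg at h
        have hsub : (Finset.univ.filter fun k =>
            Real.sign (∑ k', c k' * sg (s k')) * c k ≠ xstar k) ⊆ Bad := by
          intro k hk
          rw [Finset.mem_filter] at hk ⊢
          refine ⟨Finset.mem_univ k, ?_⟩
          intro hcon
          apply hk.2
          rw [h, ← hcon, ← mul_assoc, hp2, one_mul]
        have hcard : ((Finset.univ.filter fun k =>
            Real.sign (∑ k', c k' * sg (s k')) * c k ≠ xstar k).card : ℝ) ≤ b := by
          rw [hb]; exact_mod_cast Finset.card_le_card hsub
        have hnn : (0:ℝ) ≤ 2 * n * 0 := by norm_num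
        linarith
    -- Chernoff pointwise bound on the indicator
    have hcher : ∀ s : K → Bool,
        (if Real.sign (∑ k, c k * sg (s k)) ≠ pstar then (1:ℝ) else 0)
          ≤ ∏ k, Real.exp (-(ε/2) * (pstar * (c k * sg (s k)))) := by
      intro s
      have hsum : (∑ k, (-(ε/2) * (pstar * (c k * sg (s k)))))
          = -(ε/2) * pstar * (∑ k, c k * sg (s k)) := by
        rw [Finset.mul_sum]
        exact Finset.sum_congr rfl fun k _ => by ring
      have hprod : (∏ k, Real.exp (-(ε/2) * (pstar * (c k * sg (s k)))))
          = Real.exp (-(ε/2) * pstar * (∑ k, c k * sg (s k))) := by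
        rw [← Real.exp_sum, hsum]
      rw [hprod]
      split
      · rename_i h
        refine Real.one_le_exp ?_
        rcases hp with h1 | h1
        · have hS : (∑ k, c k * sg (s k)) ≤ 0 := by
            by_contra hpos
            push_neg at hpos
            exact h (by rw [Real.sign_of_pos hpos, h1])
          rw [h1]
          nlinarith
        · have hS : 0 ≤ (∑ k, c k * sg (s k)) := by
            by_contra hneg
            push_neg at hneg
            exact h (by rw [Real.sign_of_neg hneg, h1])
          rw [h1]
          nlinarith
      · exact (Real.exp_pos _).le
    -- the probability that σ ≠ p*
    have hP : (∑ s : K → Bool, advProb ε xstar s *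
          (if Real.sign (∑ k, c k * sg (s k)) ≠ pstar then (1:ℝ) else 0))
        ≤ Real.exp (-(ε^2 * n)/8) := by
      have step1 : (∑ s : K → Bool, advProb ε xstar s *
            (if Real.sign (∑ k, c k * sg (s k)) ≠ pstar then (1:ℝ) else 0))
          ≤ ∑ s : K → Bool, advProb ε xstar s *
              ∏ k, Real.exp (-(ε/2) * (pstar * (c k * sg (s k)))) :=
        Finset.sum_le_sum fun s _ => mul_le_mul_of_nonneg_left (hcher s) (hadv0 s)
      have step2 : (∑ s : K → Bool, advProb ε xstar s *
            ∏ k, Real.exp (-(ε/2) * (pstar * (c k * sg (s k)))))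
          = ∏ k, (w k true * Real.exp (-(ε/2) * (pstar * (c k * sg true)))
              + w k false * Real.exp (-(ε/2) * (pstar * (c k * sg false)))) := by
        simp_rw [hadv, ← Finset.prod_mul_distrib]
        exact hfact (fun k u => w k u * Real.exp (-(ε/2) * (pstar * (c k * sg u))))
      have gB := goodB hε0.le hε1
      have bB := badB hε0.le hε1
      have perk8 : ∀ p cc xx : ℝ, (p = 1 ∨ p = -1) → (cc = 1 ∨ cc = -1) → (xx = 1 ∨ xx = -1) →
          (if (1:ℝ) = xx then (1+ε)/2 else (1-ε)/2) * Real.exp (-(ε/2) * (p * (cc * 1)))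
            + (if (-1:ℝ) = xx then (1+ε)/2 else (1-ε)/2) * Real.exp (-(ε/2) * (p * (cc * (-1))))
          ≤ Real.exp (if p * xx ≠ cc then 5*ε^2/8 else -(3*ε^2/8)) := by
        have gB' := gB; rw [add_comm] at gB'
        have bB' := bB; rw [add_comm] at bB'
        rintro p cc xx (rfl|rfl) (rfl|rfl) (rfl|rfl) <;> norm_num <;>
          first | exact gB | exact gB' | exact bB | exact bB'
      have perk : ∀ k, (w k true * Real.exp (-(ε/2) * (pstar * (c k * sg true)))
            + w k false * Real.exp (-(ε/2) * (pstar * (c k * sg false))))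
          ≤ Real.exp (if pstar * xstar k ≠ c k then 5*ε^2/8 else -(3*ε^2/8)) := by
        intro k
        have hsgt : sg true = 1 := rfl
        have hsgf : sg false = (-1:ℝ) := rfl
        have := perk8 pstar (c k) (xstar k) hp (hc k) (hxs k)
        simp only [hwdef, hsgt, hsgf]
        exact this
      have step3 : (∏ k, (w k true * Real.exp (-(ε/2) * (pstar * (c k * sg true)))
            + w k false * Real.exp (-(ε/2) * (pstar * (c k * sg false)))))
          ≤ ∏ k, Real.exp (if pstar * xstar k ≠ c k then 5*ε^2/8 else -(3*ε^2/8)) := by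
        refine Finset.prod_le_prod (fun k _ => ?_) (fun k _ => perk k)
        exact add_nonneg (mul_nonneg (hw0 k true) (Real.exp_pos _).le)
          (mul_nonneg (hw0 k false) (Real.exp_pos _).le)
      have step4 : (∏ k, Real.exp (if pstar * xstar k ≠ c k then 5*ε^2/8 else -(3*ε^2/8)))
          = Real.exp (∑ k, if pstar * xstar k ≠ c k then 5*ε^2/8 else -(3*ε^2/8)) :=
        (Real.exp_sum _ _).symm
      have hsumg : (∑ k, if pstar * xstar k ≠ c k then 5*ε^2/8 else -(3*ε^2/8))
          = b * ε^2 - 3*ε^2/8 * n := by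
        have hk : ∀ k : K, (if pstar * xstar k ≠ c k then 5*ε^2/8 else -(3*ε^2/8))
            = (if pstar * xstar k ≠ c k then ε^2 else 0) + (-(3*ε^2/8)) := by
          intro k; split <;> ring
        simp_rw [hk]
        rw [Finset.sum_add_distrib, Finset.sum_const, ← Finset.sum_filter, Finset.sum_const]
        rw [hb, hn, hBadDef]
        simp only [nsmul_eq_mul, Finset.card_univ]
        ring
      have step5 : Real.exp (b * ε^2 - 3*ε^2/8 * n) ≤ Real.exp (-(ε^2 * n)/8) := by
        rw [Real.exp_le_exp]
        nlinarith [sq_nonneg ε, mul_nonneg (le_of_lt (by linarith : (0:ℝ) < n - 4*b)) (sq_nonneg ε)]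
      calc (∑ s : K → Bool, advProb ε xstar s *
            (if Real.sign (∑ k, c k * sg (s k)) ≠ pstar then (1:ℝ) else 0))
          ≤ ∑ s : K → Bool, advProb ε xstar s *
              ∏ k, Real.exp (-(ε/2) * (pstar * (c k * sg (s k)))) := step1
        _ = _ := step2
        _ ≤ ∏ k, Real.exp (if pstar * xstar k ≠ c k then 5*ε^2/8 else -(3*ε^2/8)) := step3
        _ = Real.exp (∑ k, if pstar * xstar k ≠ c k then 5*ε^2/8 else -(3*ε^2/8)) := step4
        _ = Real.exp (b * ε^2 - 3*ε^2/8 * n) := by rw [hsumg]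
        _ ≤ Real.exp (-(ε^2 * n)/8) := step5
    -- assemble
    have hsplit : (∑ s : K → Bool, advProb ε xstar s *
          (n * (if Real.sign (∑ k, c k * sg (s k)) ≠ pstar then (1:ℝ) else 0)
            + ((Finset.univ.filter fun k =>
                Real.sign (∑ k', c k' * sg (s k')) * c k ≠ xstar k).card : ℝ)))
        ≤ 2 * n * (∑ s : K → Bool, advProb ε xstar s *
            (if Real.sign (∑ k, c k * sg (s k)) ≠ pstar then (1:ℝ) else 0)) + b := by
      have h1 : (∑ s : K → Bool, advProb ε xstar s *
            (n * (if Real.sign (∑ k, c k * sg (s k)) ≠ pstar then (1:ℝ) else 0)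
              + ((Finset.univ.filter fun k =>
                  Real.sign (∑ k', c k' * sg (s k')) * c k ≠ xstar k).card : ℝ)))
          ≤ ∑ s : K → Bool, advProb ε xstar s *
              (2 * n * (if Real.sign (∑ k, c k * sg (s k)) ≠ pstar then (1:ℝ) else 0) + b) :=
        Finset.sum_le_sum fun s _ => mul_le_mul_of_nonneg_left (hpoint s) (hadv0 s)
      have h2 : (∑ s : K → Bool, advProb ε xstar s *
            (2 * n * (if Real.sign (∑ k, c k * sg (s k)) ≠ pstar then (1:ℝ) else 0) + b))
          = 2 * n * (∑ s : K → Bool, advProb ε xstar s *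
              (if Real.sign (∑ k, c k * sg (s k)) ≠ pstar then (1:ℝ) else 0)) + b := by
        simp_rw [mul_add]
        rw [Finset.sum_add_distrib, ← Finset.sum_mul, hmass, one_mul, Finset.mul_sum]
        congr 1
        exact Finset.sum_congr rfl fun s _ => by ring
      rw [h2] at h1
      exact h1
    refine le_trans hsplit ?_
    have hfin1 : 2 * n * (∑ s : K → Bool, advProb ε xstar s *
          (if Real.sign (∑ k, c k * sg (s k)) ≠ pstar then (1:ℝ) else 0))
        ≤ 2 * n * Real.exp (-(ε^2 * n)/8) :=
      mul_le_mul_of_nonneg_left hP (by linarith)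
    have hexp2 : Real.exp (-(ε^2 * n)/8) ≤ Real.exp (-(ε ^ 2 * t) / 8) := by
      rw [Real.exp_le_exp]
      have htn : t ≤ n := hKt
      nlinarith [sq_nonneg ε, mul_nonneg (sq_nonneg ε) (by linarith : (0:ℝ) ≤ n - t)]
    have hfin2 : 2 * n * Real.exp (-(ε^2 * n)/8) ≤ 2 * Real.exp (-(ε ^ 2 * t) / 8) * n := by
      have := mul_le_mul_of_nonneg_left hexp2 (by linarith : (0:ℝ) ≤ 2 * n)
      linarith [this]
    linarith
end

section
/- Let V be a finite set of variables with ground-truth values x_v* ∈ {−1,1} for v ∈ V, let L be a nonempty finite set of constraints where each constraint ℓ ∈ L consists of an unordered pair {j_ℓ, k_ℓ} of two distinct variables of V together with a sign c_ℓ ∈ {−1,1}, and suppose: (a) every variable v ∈ V belongs to at most t constraints of L, and (b) c_ℓ · x_{j_ℓ}* · x_{k_ℓ}* = 1 for at least (3/4)|L| constraints ℓ. Let ε ∈ (0,1] and let (x̃_v)_{v∈V} be mutually independent {−1,1}-valued random variables with Pr(x̃_v = x_v*) = (1+ε)/2. Then Pr( Σ_{ℓ∈L} c_ℓ x̃_{j_ℓ}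 x̃_{k_ℓ} ≤ 0 ) ≤ exp(−ε⁴|L|/(16t)). -/
open Finset
open Real Function

lemma hoeffding_aux {p q : ℝ} (hp : 0 ≤ p) (hq : 0 ≤ q) (hpq : p + q = 1) (d : ℝ) :
    p * exp (q * d) + q * exp (-(p * d)) ≤ exp (d ^ 2 / 8) := by
  set F : ℝ → ℝ := fun x => p * exp (q * x) + q * exp (-(p * x)) with hF_def
  have hFpos : ∀ x, 0 < F x := by
    intro x
    rcases hp.lt_or_eq with hp' | hp'
    · have h1 : 0 < p * exp (q * x) := by positivity
      have h2 : 0 ≤ q * exp (-(p * x)) := by positivity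
      simp only [hF_def]; linarith
    · have hq1 : q = 1 := by linarith
      simp only [hF_def, ← hp', hq1, zero_mul, neg_zero, exp_zero]
      norm_num
  set N : ℝ → ℝ := fun x => p * q * exp (q * x) - q * p * exp (-(p * x)) with hN_def
  set N' : ℝ → ℝ := fun x => p * q * (q * exp (q * x)) + q * p * (p * exp (-(p * x))) with hN'_def
  have hexp1 : ∀ x : ℝ, HasDerivAt (fun y : ℝ => exp (q * y)) (exp (q * x) * q) x := fun x => by
    simpa using ((hasDerivAt_id x).const_mul q).exp
  have hexp2 : ∀ x : ℝ, HasDerivAt (fun y : ℝ => exp (-(p * y))) (exp (-(p * x)) * (-p)) x :=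
    fun x => by simpa using (((hasDerivAt_id x).const_mul p).neg).exp
  have hF : ∀ x, HasDerivAt F (N x) x := by
    intro x
    have := ((hexp1 x).const_mul p).add ((hexp2 x).const_mul q)
    refine this.congr_deriv ?_
    simp only [hN_def]; ring
  have hN : ∀ x, HasDerivAt N (N' x) x := by
    intro x
    have := ((hexp1 x).const_mul (p * q)).sub ((hexp2 x).const_mul (q * p))
    refine this.congr_deriv ?_
    simp only [hN'_def]; ring
  set L : ℝ → ℝ := fun x => Real.log (F x) with hL_def
  set D : ℝ → ℝ := fun x => N x / F x with hD_def
  have hL : ∀ x, HasDerivAt L (D x) x := fun x => (hF x).log (hFpos x).ne'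
  set D' : ℝ → ℝ := fun x => (N' x * F x - N x * N x) / (F x) ^ 2 with hD'_def
  have hD : ∀ x, HasDerivAt D (D' x) x := fun x => (hN x).div (hF x) (hFpos x).ne'
  have key : ∀ x, D' x ≤ 1 / 4 := by
    intro x
    have hFx2 : (0:ℝ) < (F x) ^ 2 := pow_pos (hFpos x) 2
    rw [hD'_def, div_le_iff₀ hFx2]
    set u := p * exp (q * x) with hu_def
    set v := q * exp (-(p * x)) with hv_def
    have hu : 0 ≤ u := by positivity
    have hv : 0 ≤ v := by positivity
    have hNx : N x = q * u - p * v := by simp only [hN_def, hu_def, hv_def]; ring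
    have hN'x : N' x = q * (q * u) + p * (p * v) := by
      simp only [hN'_def, hu_def, hv_def]; ring
    have hFx : F x = u + v := rfl
    rw [hNx, hN'x, hFx]
    have hq' : q = 1 - p := by linarith
    subst hq'
    nlinarith [sq_nonneg (u - v), mul_nonneg hu hv]
  set G' : ℝ → ℝ := fun x => x / 4 - D x with hG'_def
  set G : ℝ → ℝ := fun x => x ^ 2 / 8 - L x with hG_def
  have hG'deriv : ∀ x, HasDerivAt G' (1 / 4 - D' x) x := by
    intro x
    have h1 : HasDerivAt (fun y : ℝ => y / 4) (1 / 4) x := (hasDerivAt_id x).div_const 4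
    exact h1.sub (hD x)
  have hGderiv : ∀ x, HasDerivAt G (G' x) x := by
    intro x
    have h1 : HasDerivAt (fun y : ℝ => y ^ 2 / 8) ((2 * x ^ 1) / 8) x :=
      (hasDerivAt_pow 2 x).div_const 8
    have := h1.sub (hL x)
    refine this.congr_deriv ?_
    simp only [hG'_def]; ring
  have hG'mono : Monotone G' :=
    monotone_of_hasDerivAt_nonneg hG'deriv
      (by intro x; simp only [Pi.zero_apply]; linarith [key x])
  have hN0 : N 0 = 0 := by
    simp only [hN_def, mul_zero, neg_zero, exp_zero, mul_one]; ring
  have hD0 : D 0 = 0 := by simp [hD_def, hN0]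
  have hG'0 : G' 0 = 0 := by simp [hG'_def, hD0]
  have hL0 : L 0 = 0 := by
    simp only [hL_def, hF_def, mul_zero, neg_zero, exp_zero, mul_one, hpq]
    exact Real.log_one
  have hG0 : G 0 = 0 := by simp [hG_def, hL0]
  have hGnonneg : ∀ x, 0 ≤ G x := by
    intro x
    have hGdiff : Differentiable ℝ G := fun y => (hGderiv y).differentiableAt
    rcases le_total 0 x with hx | hx
    · have mono : MonotoneOn G (Set.Ici 0) := by
        apply monotoneOn_of_hasDerivWithinAt_nonneg (convex_Ici 0)
          hGdiff.continuous.continuousOn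
          (fun y _ => (hGderiv y).hasDerivWithinAt)
        intro y hy
        rw [interior_Ici] at hy
        have : G' 0 ≤ G' y := hG'mono (le_of_lt hy)
        linarith [hG'0]
      have := mono (Set.self_mem_Ici) (Set.mem_Ici.2 hx) hx
      linarith [hG0]
    · have anti : AntitoneOn G (Set.Iic 0) := by
        apply antitoneOn_of_hasDerivWithinAt_nonpos (convex_Iic 0)
          hGdiff.continuous.continuousOn
          (fun y _ => (hGderiv y).hasDerivWithinAt)
        intro y hy
        rw [interior_Iic] at hy
        have : G' y ≤ G' 0 := hG'mono (le_of_lt hy)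
        linarith [hG'0]
      have := anti (Set.mem_Iic.2 hx) (Set.self_mem_Iic) hx
      linarith [hG0]
    
  have hLd : L d ≤ d ^ 2 / 8 := by have := hGnonneg d; simp only [hG_def] at this; linarith
  calc F d = exp (L d) := (Real.exp_log (hFpos d)).symm
    _ ≤ exp (d ^ 2 / 8) := Real.exp_le_exp.2 hLd

lemma hoeffding_two_point {p q x y : ℝ} (hp : 0 ≤ p) (hq : 0 ≤ q) (hpq : p + q = 1) :
    p * exp x + q * exp y ≤ exp (p * x + q * y + (x - y) ^ 2 / 8) := by
  have h := hoeffding_aux hp hq hpq (x - y)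
  have e1 : p * exp x + q * exp y
      = exp (p * x + q * y) * (p * exp (q * (x - y)) + q * exp (-(p * (x - y)))) := by
    rw [mul_add]
    rw [show exp (p * x + q * y) * (p * exp (q * (x - y))) =
      p * (exp (p * x + q * y) * exp (q * (x - y))) by ring, ← Real.exp_add]
    rw [show exp (p * x + q * y) * (q * exp (-(p * (x - y)))) =
      q * (exp (p * x + q * y) * exp (-(p * (x - y)))) by ring, ← Real.exp_add]
    have e2 : p * x + q * y + q * (x - y) = x := by linear_combination x * hpq
    have e3 : p * x + q * y + -(p * (x - y)) = y := by linear_combination y * hpq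
    rw [e2, e3]
  rw [e1]
  refine le_trans (mul_le_mul_of_nonneg_left h (Real.exp_pos _).le) ?_
  rw [← Real.exp_add]


section framework
variable {ι : Type*} [Fintype ι] [DecidableEq ι]

noncomputable def Ew (w : ι → Bool → ℝ) (g : (ι → Bool) → ℝ) : ℝ :=
  ∑ s : ι → Bool, (∏ i, w i (s i)) * g s

lemma sum_prod_w (w : ι → Bool → ℝ) (hw1 : ∀ i, w i true + w i false = 1) :
    ∑ s : ι → Bool, ∏ i, w i (s i) = 1 := by
  have h := Finset.prod_univ_sum (fun _ : ι => (Finset.univ : Finset Bool)) (fun i b => w i b)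
  rw [Fintype.piFinset_univ] at h
  rw [← h]
  have h2 : ∀ i : ι, ∑ b : Bool, w i b = 1 := by
    intro i; rw [Fintype.sum_bool]; exact hw1 i
  rw [Finset.prod_congr rfl (fun i _ => h2 i), Finset.prod_const_one]

lemma Ew_mono (w : ι → Bool → ℝ) (hw0 : ∀ i b, 0 ≤ w i b) (g h : (ι → Bool) → ℝ)
    (hgh : ∀ s, g s ≤ h s) : Ew w g ≤ Ew w h := by
  apply Finset.sum_le_sum
  intro s _
  exact mul_le_mul_of_nonneg_left (hgh s) (Finset.prod_nonneg fun i _ => hw0 i (s i))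

lemma Ew_smul (w : ι → Bool → ℝ) (a : ℝ) (g : (ι → Bool) → ℝ) :
    Ew w (fun s => a * g s) = a * Ew w g := by
  simp only [Ew, Finset.mul_sum]
  exact Finset.sum_congr rfl fun s _ => by ring

lemma Ew_cond (w : ι → Bool → ℝ) (hw1 : ∀ i, w i true + w i false = 1) (i : ι)
    (h : (ι → Bool) → ℝ) :
    Ew w h = Ew w (fun s => w i true * h (Function.update s i true)
      + w i false * h (Function.update s i false)) := by
  classical
  set e := Equiv.funSplitAt i Bool with he_def
  have hσ : ∀ (b : Bool) (s' : {j // j ≠ i} → Bool) (b' : Bool),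
      Function.update (e.symm (b, s')) i b' = e.symm (b', s') := by
    intro b s' b'
    funext m
    rcases eq_or_ne m i with rfl | hm
    · simp [e]
    · simp [Function.update_of_ne hm, e, hm]
  have hP : ∀ (b : Bool) (s' : {j // j ≠ i} → Bool),
      (∏ m, w m ((e.symm (b, s')) m)) = w i b * ∏ m : {j // j ≠ i}, w m (s' m) := by
    intro b s'
    rw [Fintype.prod_eq_mul_prod_compl i]
    congr 1
    · simp [e]
    · rw [Finset.prod_subtype (p := fun m => m ≠ i) (({i}ᶜ : Finset ι)) (fun m => by simp)
        (fun m => w m ((e.symm (b, s')) m))]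
      apply Finset.prod_congr rfl
      intro m _
      have hms : (e.symm (b, s')) ↑m = s' m := by simp [e, m.2]
      rw [hms]
  have expand : ∀ (h : (ι → Bool) → ℝ), Ew w h = ∑ s' : {j // j ≠ i} → Bool,
      (w i true * ((∏ m : {j // j ≠ i}, w m (s' m)) * h (e.symm (true, s')))
       + w i false * ((∏ m : {j // j ≠ i}, w m (s' m)) * h (e.symm (false, s')))) := by
    intro h
    rw [Ew, ← Equiv.sum_comp e.symm (fun s => (∏ m, w m (s m)) * h s), Fintype.sum_prod_type,
      Fintype.sum_bool, ← Finset.sum_add_distrib]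
    apply Finset.sum_congr rfl
    intro s' _
    rw [hP, hP]
    ring
  rw [expand, expand]
  apply Finset.sum_congr rfl
  intro s' _
  simp only [hσ]
  have h1 := hw1 i
  set Q := ∏ m : {j // j ≠ i}, w m (s' m)
  set hT := h (e.symm (true, s'))
  set hF := h (e.symm (false, s'))
  linear_combination (-(Q * (w i true * hT + w i false * hF))) * h1
end framework
lemma eq_of_indep {ι : Type*} [Fintype ι] [DecidableEq ι] (f : (ι → Bool) → ℝ)
    (hf : ∀ i (s : ι → Bool) b, f (Function.update s i b) = f s) (s s' : ι → Bool) :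
    f s = f s' := by
  classical
  have key : ∀ (A : Finset ι) (s s' : ι → Bool), (∀ m, m ∉ A → s m = s' m) → f s = f s' := by
    intro A
    induction A using Finset.induction_on with
    | empty =>
      intro s s' h
      have : s = s' := funext fun m => h m (Finset.notMem_empty m)
      rw [this]
    | @insert i B hiB ih =>
      intro s s' h
      have h1 : f s = f (Function.update s i (s' i)) := (hf i s (s' i)).symm
      rw [h1]
      apply ih
      intro m hm
      rcases eq_or_ne m i with rfl | hmi
      · rw [Function.update_self]
      · rw [Function.update_of_ne hmi]
        exact h m (by simp [hm, hmi])
  exact key Finset.univ s s' (fun m hm => absurd (Finset.mem_univ m) hm)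

lemma Ew_mgf {ι : Type*} [Fintype ι] [DecidableEq ι] (w : ι → Bool → ℝ)
    (hw0 : ∀ i b, 0 ≤ w i b) (hw1 : ∀ i, w i true + w i false = 1)
    (A : Finset ι) (f : (ι → Bool) → ℝ) (c : ι → ℝ)
    (hindep : ∀ i ∉ A, ∀ (s : ι → Bool) b, f (Function.update s i b) = f s)
    (hbd : ∀ i ∈ A, ∀ (s : ι → Bool) b b',
      |f (Function.update s i b) - f (Function.update s i b')| ≤ c i) :
    Ew w (fun s => Real.exp (f s)) ≤ Real.exp (Ew w f + (∑ i ∈ A, c i ^ 2) / 8) := by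
  classical
  induction A using Finset.induction_on generalizing f with
  | empty =>
    set s₀ : ι → Bool := fun _ => true with hs₀
    have hc : ∀ s, f s = f s₀ :=
      fun s => eq_of_indep f (fun i s b => hindep i (Finset.notMem_empty i) s b) s s₀
    have h1 : Ew w (fun s => Real.exp (f s)) = Real.exp (f s₀) := by
      rw [Ew]
      rw [Finset.sum_congr rfl (fun s _ => by rw [hc s])]
      rw [← Finset.sum_mul, sum_prod_w w hw1, one_mul]
    have h2 : Ew w f = f s₀ := by
      rw [Ew]
      rw [Finset.sum_congr rfl (fun s _ => by rw [hc s])]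
      rw [← Finset.sum_mul, sum_prod_w w hw1, one_mul]
    rw [h1, h2]
    simp
  | @insert i B hiB ih =>
    set g : (ι → Bool) → ℝ := fun s => w i true * f (Function.update s i true)
      + w i false * f (Function.update s i false) with hg_def
    have hgindep : ∀ m ∉ B, ∀ (s : ι → Bool) b, g (Function.update s m b) = g s := by
      intro m hm s b
      rcases eq_or_ne m i with rfl | hmi
      · simp only [hg_def, Function.update_idem]
      · have hmA : m ∉ insert i B := by simp [hmi, hm]
        simp only [hg_def]
        rw [Function.update_comm hmi b true s, Function.update_comm hmi b false s,
          hindep m hmA, hindep m hmA]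
    have hgbd : ∀ m ∈ B, ∀ (s : ι → Bool) b b',
        |g (Function.update s m b) - g (Function.update s m b')| ≤ c m := by
      intro m hm s b b'
      have hmi : m ≠ i := fun h => hiB (h ▸ hm)
      simp only [hg_def]
      rw [Function.update_comm hmi b true s, Function.update_comm hmi b false s,
        Function.update_comm hmi b' true s, Function.update_comm hmi b' false s]
      have e1 : w i true * f (Function.update (Function.update s i true) m b)
          + w i false * f (Function.update (Function.update s i false) m b)
          - (w i true * f (Function.update (Function.update s i true) m b')
            + w i false * f (Function.update (Function.update s i false) m b'))
          = w i true * (f (Function.update (Function.update s i true) m b)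
              - f (Function.update (Function.update s i true) m b'))
            + w i false * (f (Function.update (Function.update s i false) m b)
              - f (Function.update (Function.update s i false) m b')) := by ring
      rw [e1]
      calc |_| ≤ |w i true * (f (Function.update (Function.update s i true) m b)
              - f (Function.update (Function.update s i true) m b'))|
            + |w i false * (f (Function.update (Function.update s i false) m b)
              - f (Function.update (Function.update s i false) m b'))| := abs_add_le _ _
        _ ≤ w i true * c m + w i false * c m := by
            rw [abs_mul, abs_mul, abs_of_nonneg (hw0 i true), abs_of_nonneg (hw0 i false)]
            exact add_le_add
              (mul_le_mul_of_nonneg_left (hbd m (Finset.mem_insert_of_mem hm) _ b b') (hw0 i true))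
              (mul_le_mul_of_nonneg_left (hbd m (Finset.mem_insert_of_mem hm) _ b b') (hw0 i false))
        _ = c m := by rw [← add_mul, hw1 i, one_mul]
    have hpoint : ∀ s : ι → Bool,
        w i true * Real.exp (f (Function.update s i true))
          + w i false * Real.exp (f (Function.update s i false))
        ≤ Real.exp (c i ^ 2 / 8) * Real.exp (g s) := by
      intro s
      refine le_trans (hoeffding_two_point (hw0 i true) (hw0 i false) (hw1 i)) ?_
      rw [← Real.exp_add]
      apply Real.exp_le_exp.2
      have hb := hbd i (Finset.mem_insert_self i B) s true false
      have h2 : (f (Function.update s i true) - f (Function.update s i false)) ^ 2 ≤ c i ^ 2 := by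
        calc (f (Function.update s i true) - f (Function.update s i false)) ^ 2
            = |f (Function.update s i true) - f (Function.update s i false)| ^ 2 := (sq_abs _).symm
          _ ≤ c i ^ 2 := pow_le_pow_left₀ (abs_nonneg _) hb 2
      simp only [hg_def]
      linarith
    have hEfg : Ew w f = Ew w g := Ew_cond w hw1 i f
    calc Ew w (fun s => Real.exp (f s))
        = Ew w (fun s => w i true * Real.exp (f (Function.update s i true))
            + w i false * Real.exp (f (Function.update s i false))) :=
          Ew_cond w hw1 i (fun s => Real.exp (f s))
      _ ≤ Ew w (fun s => Real.exp (c i ^ 2 / 8) * Real.exp (g s)) :=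
          Ew_mono w hw0 _ _ hpoint
      _ = Real.exp (c i ^ 2 / 8) * Ew w (fun s => Real.exp (g s)) := Ew_smul w _ _
      _ ≤ Real.exp (c i ^ 2 / 8) * Real.exp (Ew w g + (∑ m ∈ B, c m ^ 2) / 8) :=
          mul_le_mul_of_nonneg_left (ih g hgindep hgbd) (Real.exp_pos _).le
      _ = Real.exp (Ew w f + (∑ m ∈ insert i B, c m ^ 2) / 8) := by
          rw [← Real.exp_add, Finset.sum_insert hiB, hEfg]
          congr 1
          ring

lemma Ew_sum {ι : Type*} [Fintype ι] [DecidableEq ι] (w : ι → Bool → ℝ)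
    {κ : Type*} [Fintype κ] (G : κ → (ι → Bool) → ℝ) :
    Ew w (fun s => ∑ ℓ, G ℓ s) = ∑ ℓ, Ew w (G ℓ) := by
  simp only [Ew, Finset.mul_sum]
  rw [Finset.sum_comm]

lemma Ew_const {ι : Type*} [Fintype ι] [DecidableEq ι] (w : ι → Bool → ℝ)
    (hw1 : ∀ i, w i true + w i false = 1) (a : ℝ) :
    Ew w (fun _ => a) = a := by
  rw [Ew, ← Finset.sum_mul, sum_prod_w w hw1, one_mul]

/-- McDiarmid-type bound for light constraints.  Let `V` be a finite variable
set with ground-truth values `x* v ∈ {-1, 1}`, and `L` a nonempty finite set of constraints, each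
consisting of a pair of distinct variables `j ℓ ≠ k ℓ` and a sign `c ℓ ∈ {-1, 1}`, such that
(a) every variable belongs to at most `t` constraints of `L`, and (b) `c ℓ * x*(j ℓ) * x*(k ℓ) = 1`
for at least `(3/4)|L|` constraints.  For label advice `x̃` with parameter `ε ∈ (0, 1]`,
`Pr(∑_ℓ c ℓ * x̃(j ℓ) * x̃(k ℓ) ≤ 0) ≤ exp(-ε⁴ |L| / (16 t))`. -/
theorem mcdiarmid_bound_for_light_sign
    (V : Type*) [Fintype V] [DecidableEq V]
    (L : Type*) [Fintype L] [DecidableEq L] [Nonempty L]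
    (xstar : V → ℝ) (hxs : ∀ v, xstar v = 1 ∨ xstar v = -1)
    (j k : L → V) (hjk : ∀ ℓ, j ℓ ≠ k ℓ)
    (c : L → ℝ) (hc : ∀ ℓ, c ℓ = 1 ∨ c ℓ = -1)
    (t : ℝ) (ht : 0 < t)
    (hdeg : ∀ v : V, ((Finset.univ.filter fun ℓ => j ℓ = v ∨ k ℓ = v).card : ℝ) ≤ t)
    (hmaj : (3 / 4 : ℝ) * Fintype.card L
      ≤ ((Finset.univ.filter fun ℓ => c ℓ * xstar (j ℓ) * xstar (k ℓ) = 1).card : ℝ))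
    (ε : ℝ) (hε : ε ∈ Set.Ioc (0 : ℝ) 1) :
    (∑ s : V → Bool, advProb ε xstar s *
        (if (∑ ℓ, c ℓ * sg (s (j ℓ)) * sg (s (k ℓ))) ≤ 0 then (1 : ℝ) else 0))
      ≤ Real.exp (-(ε ^ 4 * Fintype.card L) / (16 * t)) := by
  classical
  obtain ⟨hε0, hε1⟩ := hε
  set w : V → Bool → ℝ := fun v b => if sg b = xstar v then (1 + ε) / 2 else (1 - ε) / 2
    with hw_def
  have hw0 : ∀ v b, 0 ≤ w v b := by
    intro v b
    simp only [hw_def]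
    split <;> linarith
  have hsgT : sg true = 1 := rfl
  have hsgF : sg false = -1 := rfl
  have hw1 : ∀ v, w v true + w v false = 1 := by
    intro v
    rcases hxs v with h | h <;>
      simp only [hw_def, hsgT, hsgF, h] <;> norm_num <;> ring
  have hwd : ∀ v, w v true - w v false = ε * xstar v := by
    intro v
    rcases hxs v with h | h <;>
      simp only [hw_def, hsgT, hsgF, h] <;> norm_num <;> ring
  set f : (V → Bool) → ℝ := fun s => ∑ ℓ, c ℓ * sg (s (j ℓ)) * sg (s (k ℓ)) with hf_def
  set n : ℝ := (Fintype.card L : ℝ) with hn_def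
  have hn1 : 1 ≤ n := by
    have h := Fintype.card_pos (α := L)
    have h2 : (1:ℕ) ≤ Fintype.card L := h
    rw [hn_def]; exact_mod_cast h2
  have habs_sg : ∀ b, |sg b| = 1 := by intro b; cases b <;> simp [sg]
  have habs_c : ∀ ℓ, |c ℓ| = 1 := by
    intro ℓ; rcases hc ℓ with h | h <;> rw [h] <;> simp
  -- bounded differences for f
  have hterm : ∀ (ℓ : L) (x y x' y' : Bool),
      |c ℓ * sg x * sg y - c ℓ * sg x' * sg y'| ≤ 2 := by
    intro ℓ x y x' y'
    have h1 : |c ℓ * sg x * sg y| = 1 := by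
      rw [abs_mul, abs_mul, habs_c, habs_sg, habs_sg]; norm_num
    have h2 : |c ℓ * sg x' * sg y'| = 1 := by
      rw [abs_mul, abs_mul, habs_c, habs_sg, habs_sg]; norm_num
    obtain ⟨hA1, hA2⟩ := abs_le.1 h1.le
    obtain ⟨hB1, hB2⟩ := abs_le.1 h2.le
    rw [abs_le]
    constructor <;> [linarith; linarith]
  have hfbd : ∀ (v : V) (s : V → Bool) (b b' : Bool),
      |f (Function.update s v b) - f (Function.update s v b')|
        ≤ 2 * ((Finset.univ.filter fun ℓ => j ℓ = v ∨ k ℓ = v).card : ℝ) := by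
    intro v s b b'
    simp only [hf_def]
    rw [← Finset.sum_sub_distrib]
    refine le_trans (Finset.abs_sum_le_sum_abs _ _) ?_
    rw [← Finset.sum_filter_add_sum_filter_not Finset.univ (fun ℓ => j ℓ = v ∨ k ℓ = v)]
    have hz : ∀ ℓ ∈ Finset.univ.filter (fun ℓ => ¬(j ℓ = v ∨ k ℓ = v)),
        |c ℓ * sg (Function.update s v b (j ℓ)) * sg (Function.update s v b (k ℓ))
          - c ℓ * sg (Function.update s v b' (j ℓ)) * sg (Function.update s v b' (k ℓ))| = 0 := by
      intro ℓ hℓ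
      simp only [Finset.mem_filter, not_or] at hℓ
      obtain ⟨-, hjv, hkv⟩ := hℓ
      rw [Function.update_of_ne hjv, Function.update_of_ne hkv,
        Function.update_of_ne hjv, Function.update_of_ne hkv, sub_self, abs_zero]
    rw [Finset.sum_congr rfl hz, Finset.sum_const, smul_zero, add_zero]
    refine le_trans (Finset.sum_le_sum (g := fun _ => (2:ℝ)) (fun ℓ _ => hterm ℓ _ _ _ _)) ?_
    rw [Finset.sum_const, nsmul_eq_mul]
    ring_nf
    exact le_refl _
  -- expectation of f
  have hEsingle : ∀ ℓ : L,
      Ew w (fun s => c ℓ * sg (s (j ℓ)) * sg (s (k ℓ)))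
        = c ℓ * (ε * xstar (j ℓ)) * (ε * xstar (k ℓ)) := by
    intro ℓ
    rw [Ew_cond w hw1 (j ℓ) (fun s => c ℓ * sg (s (j ℓ)) * sg (s (k ℓ)))]
    have e1 : (fun s : V → Bool => w (j ℓ) true
          * (c ℓ * sg (Function.update s (j ℓ) true (j ℓ)) * sg (Function.update s (j ℓ) true (k ℓ)))
        + w (j ℓ) false
          * (c ℓ * sg (Function.update s (j ℓ) false (j ℓ)) * sg (Function.update s (j ℓ) false (k ℓ))))
        = fun s : V → Bool => (c ℓ * (ε * xstar (j ℓ))) * sg (s (k ℓ)) := by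
      funext s
      rw [Function.update_self, Function.update_self,
        Function.update_of_ne (Ne.symm (hjk ℓ)), Function.update_of_ne (Ne.symm (hjk ℓ)),
        hsgT, hsgF]
      have hthis := hwd (j ℓ)
      linear_combination (c ℓ * sg (s (k ℓ))) * hthis
    rw [e1, Ew_smul]
    rw [Ew_cond w hw1 (k ℓ) (fun s => sg (s (k ℓ)))]
    have e2 : (fun s : V → Bool => w (k ℓ) true * sg (Function.update s (k ℓ) true (k ℓ))
        + w (k ℓ) false * sg (Function.update s (k ℓ) false (k ℓ)))
        = fun _ : V → Bool => ε * xstar (k ℓ) := by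
      funext s
      rw [Function.update_self, Function.update_self, hsgT, hsgF]
      have := hwd (k ℓ)
      linarith
    rw [e2, Ew_const w hw1]
  have hprodpm : ∀ ℓ : L, c ℓ * xstar (j ℓ) * xstar (k ℓ) = 1
      ∨ c ℓ * xstar (j ℓ) * xstar (k ℓ) = -1 := by
    intro ℓ
    rcases hc ℓ with h | h <;> rcases hxs (j ℓ) with h1 | h1 <;> rcases hxs (k ℓ) with h2 | h2 <;>
      rw [h, h1, h2] <;> norm_num
  have hsum_cx : (n / 2 : ℝ) ≤ ∑ ℓ, c ℓ * xstar (j ℓ) * xstar (k ℓ) := by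
    set M := Finset.univ.filter (fun ℓ => c ℓ * xstar (j ℓ) * xstar (k ℓ) = 1) with hM_def
    have hsplit := Finset.sum_filter_add_sum_filter_not Finset.univ
      (fun ℓ => c ℓ * xstar (j ℓ) * xstar (k ℓ) = 1) (fun ℓ => c ℓ * xstar (j ℓ) * xstar (k ℓ))
    have h1 : ∑ ℓ ∈ M, c ℓ * xstar (j ℓ) * xstar (k ℓ) = (M.card : ℝ) := by
      rw [Finset.sum_congr rfl (fun ℓ hℓ => (Finset.mem_filter.1 hℓ).2), Finset.sum_const,
        nsmul_eq_mul, mul_one]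
    have h2 : ∑ ℓ ∈ Finset.univ.filter (fun ℓ => ¬(c ℓ * xstar (j ℓ) * xstar (k ℓ) = 1)),
        c ℓ * xstar (j ℓ) * xstar (k ℓ)
        = -(((Finset.univ.filter (fun ℓ => ¬(c ℓ * xstar (j ℓ) * xstar (k ℓ) = 1))).card : ℝ)) := by
      rw [Finset.sum_congr rfl (fun ℓ hℓ => by
        rcases hprodpm ℓ with h | h
        · exact absurd h (Finset.mem_filter.1 hℓ).2
        · exact h), Finset.sum_const, nsmul_eq_mul, mul_neg_one]
    have hcards : M.card
        + (Finset.univ.filter (fun ℓ => ¬(c ℓ * xstar (j ℓ) * xstar (k ℓ) = 1))).card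
        = Fintype.card L := Finset.card_filter_add_card_filter_not _
    have hcardsR : (M.card : ℝ)
        + ((Finset.univ.filter (fun ℓ => ¬(c ℓ * xstar (j ℓ) * xstar (k ℓ) = 1))).card : ℝ)
        = n := by rw [hn_def, ← hcards]; push_cast; ring
    rw [← hsplit, h1, h2]
    have hmaj' : (3 / 4 : ℝ) * n ≤ (M.card : ℝ) := hmaj
    linarith
  have hEf : ε ^ 2 * (n / 2) ≤ Ew w f := by
    have : Ew w f = ∑ ℓ, c ℓ * (ε * xstar (j ℓ)) * (ε * xstar (k ℓ)) := by
      rw [hf_def, Ew_sum]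
      exact Finset.sum_congr rfl (fun ℓ _ => hEsingle ℓ)
    rw [this]
    have he : ∀ ℓ : L, c ℓ * (ε * xstar (j ℓ)) * (ε * xstar (k ℓ))
        = ε ^ 2 * (c ℓ * xstar (j ℓ) * xstar (k ℓ)) := fun ℓ => by ring
    rw [Finset.sum_congr rfl (fun ℓ _ => he ℓ), ← Finset.mul_sum]
    have hε2 : (0:ℝ) ≤ ε ^ 2 := sq_nonneg ε
    exact mul_le_mul_of_nonneg_left hsum_cx hε2
  -- degree sum
  have hdegsum : ∑ v : V, ((Finset.univ.filter fun ℓ => j ℓ = v ∨ k ℓ = v).card : ℝ)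
      = 2 * n := by
    have hnat : ∑ v : V, (Finset.univ.filter fun ℓ => j ℓ = v ∨ k ℓ = v).card
        = 2 * Fintype.card L := by
      have h1 : ∀ v : V, (Finset.univ.filter fun ℓ => j ℓ = v ∨ k ℓ = v).card
          = ∑ ℓ : L, if j ℓ = v ∨ k ℓ = v then 1 else 0 := fun v => by
        rw [Finset.card_filter]
      rw [Finset.sum_congr rfl (fun v _ => h1 v), Finset.sum_comm]
      have h2 : ∀ ℓ : L, (∑ v : V, if j ℓ = v ∨ k ℓ = v then 1 else 0) = 2 := by
        intro ℓ
        rw [← Finset.card_filter]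
        have : Finset.univ.filter (fun v => j ℓ = v ∨ k ℓ = v) = {j ℓ, k ℓ} := by
          ext v
          simp [eq_comm]
        rw [this, Finset.card_pair (hjk ℓ)]
      rw [Finset.sum_congr rfl (fun ℓ _ => h2 ℓ), Finset.sum_const, smul_eq_mul,
        Finset.card_univ]
      ring
    rw [← Nat.cast_sum, hnat, hn_def]
    push_cast
    ring
  set degR : V → ℝ := fun v => ((Finset.univ.filter fun ℓ => j ℓ = v ∨ k ℓ = v).card : ℝ)
    with hdegR_def
  have hdegsq : ∑ v : V, degR v ^ 2 ≤ 2 * t * n := by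
    have h1 : ∀ v : V, degR v ^ 2 ≤ t * degR v := by
      intro v
      have h0 : (0:ℝ) ≤ degR v := Nat.cast_nonneg _
      have := hdeg v
      nlinarith
    calc ∑ v : V, degR v ^ 2 ≤ ∑ v : V, t * degR v := Finset.sum_le_sum (fun v _ => h1 v)
      _ = t * ∑ v : V, degR v := by rw [Finset.mul_sum]
      _ = t * (2 * n) := by rw [hdegsum]
      _ = 2 * t * n := by ring
  -- main chernoff step
  set lam : ℝ := ε ^ 2 / (4 * t) with hlam_def
  have hlam0 : 0 ≤ lam := by positivity
  have hmono : (∑ s : V → Bool, advProb ε xstar s *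
        (if (∑ ℓ, c ℓ * sg (s (j ℓ)) * sg (s (k ℓ))) ≤ 0 then (1 : ℝ) else 0))
      ≤ Ew w (fun s => Real.exp (-lam * f s)) := by
    have hid : (∑ s : V → Bool, advProb ε xstar s *
        (if (∑ ℓ, c ℓ * sg (s (j ℓ)) * sg (s (k ℓ))) ≤ 0 then (1 : ℝ) else 0))
        = Ew w (fun s => if f s ≤ 0 then (1:ℝ) else 0) := rfl
    rw [hid]
    apply Ew_mono w hw0
    intro s
    by_cases h : f s ≤ 0
    · rw [if_pos h]
      rw [show (1:ℝ) = Real.exp 0 from Real.exp_zero.symm]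
      apply Real.exp_le_exp.2
      nlinarith
    · rw [if_neg h]
      exact (Real.exp_pos _).le
  have hmgf := Ew_mgf w hw0 hw1 Finset.univ (fun s => -lam * f s)
    (fun v => lam * (2 * degR v))
    (fun i hi => absurd (Finset.mem_univ i) hi)
    (by
      intro v _ s b b'
      have e1 : -lam * f (Function.update s v b) - -lam * f (Function.update s v b')
          = -lam * (f (Function.update s v b) - f (Function.update s v b')) := by ring
      rw [e1, abs_mul, abs_neg, abs_of_nonneg hlam0]
      exact mul_le_mul_of_nonneg_left (hfbd v s b b') hlam0)
  refine le_trans hmono (le_trans hmgf ?_)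
  apply Real.exp_le_exp.2
  have hEscale : Ew w (fun s => -lam * f s) = -lam * Ew w f := Ew_smul w (-lam) f
  have hsumsq : ∑ v : V, (lam * (2 * degR v)) ^ 2 = 4 * lam ^ 2 * ∑ v : V, degR v ^ 2 := by
    rw [Finset.mul_sum]
    exact Finset.sum_congr rfl (fun v _ => by ring)
  rw [hEscale, hsumsq]
  have hstep1 : -lam * Ew w f ≤ -lam * (ε ^ 2 * (n / 2)) := by
    have := mul_le_mul_of_nonneg_left hEf hlam0
    linarith
  have hstep2 : 4 * lam ^ 2 * ∑ v : V, degR v ^ 2 ≤ 4 * lam ^ 2 * (2 * t * n) := by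
    apply mul_le_mul_of_nonneg_left hdegsq
    positivity
  have hfinal : -lam * (ε ^ 2 * (n / 2)) + (4 * lam ^ 2 * (2 * t * n)) / 8
      = -(ε ^ 4 * n) / (16 * t) := by
    rw [hlam_def]
    field_simp
    ring
  linarith
end

section
/- Let V be a finite set of variables with ground-truth values x_v* ∈ {−1,1}, fix a variable i with ground-truth value xᵢ* ∈ {−1,1}, and let L be a nonempty finite set of constraints where each constraint ℓ ∈ L consists of an unordered pair {j_ℓ, k_ℓ} of two distinct variables of V together with a sign c_ℓ ∈ {−1,1}; suppose every variable v ∈ V belongs to at most t constraints of L, where t ≥ 1. Let ε ∈ (0,1] and let (x̃_v)_{v∈V} be mutually independent {−1,1}-valued random variables with Pr(x̃_v = x_v*) = (1+ε)/2. Define the random sign σᵢ := sgn(Σ_{ℓ∈L} c_ℓ x̃_{j_ℓ} x̃_{k_ℓ}) ∈ {−1,0,1}, the representative cost Cost_R := |L|·𝟙[σᵢ ≠ xᵢ*], and the ground-truth cost Cost_L := #{ℓ ∈ L : xᵢ*·x_{j_ℓ}*·x_{k_ℓ}* ≠ c_ℓ}. Then E[Cost_R] ≤ 4·Cost_L + 6t/ε⁴.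 -/
open Finset

/-- Moments of the advice: for any set `S` of variables, the expectation of
`∏ v ∈ S, x̃ v * x* v` equals `ε ^ |S|`. -/
lemma momentA {V : Type*} [Fintype V] [DecidableEq V] (ε : ℝ) (xstar : V → ℝ)
    (hxs : ∀ v, xstar v = 1 ∨ xstar v = -1) (S : Finset V) :
    ∑ s : V → Bool, advProb ε xstar s * ∏ v ∈ S, (sg (s v) * xstar v) = ε ^ S.card := by
  have key : ∀ s : V → Bool, advProb ε xstar s * ∏ v ∈ S, (sg (s v) * xstar v)
      = ∏ v, ((if sg (s v) = xstar v then (1 + ε) / 2 else (1 - ε) / 2)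
          * (if v ∈ S then sg (s v) * xstar v else 1)) := by
    intro s
    rw [show (∏ v ∈ S, (sg (s v) * xstar v))
        = ∏ v, (if v ∈ S then sg (s v) * xstar v else 1) by
      rw [Finset.prod_ite_mem, Finset.univ_inter]]
    rw [advProb, ← Finset.prod_mul_distrib]
  simp_rw [key]
  rw [← Fintype.prod_sum (fun (v : V) (b : Bool) =>
    (if sg b = xstar v then (1 + ε) / 2 else (1 - ε) / 2) * (if v ∈ S then sg b * xstar v else 1))]
  have hcoord : ∀ v : V, (∑ b : Bool, (if sg b = xstar v then (1 + ε) / 2 else (1 - ε) / 2)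
      * (if v ∈ S then sg b * xstar v else 1)) = if v ∈ S then ε else 1 := by
    intro v
    rw [Fintype.sum_bool]
    rcases hxs v with h | h <;> by_cases hv : v ∈ S <;>
      simp [sg, h, hv] <;> norm_num <;> ring
  simp_rw [hcoord]
  rw [Finset.prod_ite_mem, Finset.univ_inter, Finset.prod_const]

/-- For a `±1`-valued function, the product over `A` times the product over `B` equals the
product over the symmetric difference. -/
lemma prod_mul_prod_eq_sdiffs {V : Type*} [DecidableEq V] (f : V → ℝ)
    (hf : ∀ v, f v * f v = 1) (A B : Finset V) :
    (∏ v ∈ A, f v) * (∏ v ∈ B, f v) = ∏ v ∈ (A \ B ∪ B \ A), f v := by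
  have hA : ∏ v ∈ A, f v = (∏ v ∈ A \ B, f v) * ∏ v ∈ A ∩ B, f v := by
    rw [← Finset.prod_union (Finset.disjoint_sdiff_inter A B), Finset.sdiff_union_inter]
  have hB : ∏ v ∈ B, f v = (∏ v ∈ B \ A, f v) * ∏ v ∈ A ∩ B, f v := by
    rw [Finset.inter_comm,
      ← Finset.prod_union (Finset.disjoint_sdiff_inter B A), Finset.sdiff_union_inter]
  have hsq : (∏ v ∈ A ∩ B, f v) * ∏ v ∈ A ∩ B, f v = 1 := by
    rw [← Finset.prod_mul_distrib]
    simp_rw [hf]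
    exact Finset.prod_const_one
  have hdisj : Disjoint (A \ B) (B \ A) := disjoint_sdiff_sdiff
  rw [hA, hB, Finset.prod_union hdisj]
  calc ((∏ v ∈ A \ B, f v) * ∏ v ∈ A ∩ B, f v) * ((∏ v ∈ B \ A, f v) * ∏ v ∈ A ∩ B, f v)
      = ((∏ v ∈ A \ B, f v) * ∏ v ∈ B \ A, f v)
        * ((∏ v ∈ A ∩ B, f v) * ∏ v ∈ A ∩ B, f v) := by ring
    _ = (∏ v ∈ A \ B, f v) * ∏ v ∈ B \ A, f v := by rw [hsq, mul_one]

/-- Purely arithmetic endgame. -/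
lemma arith_endgame (ε t : ℝ) (hε0 : 0 < ε) (ht : 1 ≤ t) :
    ∀ M Bv Y : ℝ, 1 ≤ M → 0 ≤ Bv → 0 ≤ Y → Y ≤ 1 →
      (2 * Bv < M → Y * (ε ^ 2 * (M - 2 * Bv)) ^ 2 ≤ 2 * t * M) →
      M * Y ≤ 4 * Bv + 6 * t / ε ^ 4 := by
  intro M Bv Y hM hBv hY0 hY1 hcheb'
  have hε4 : (0 : ℝ) < ε ^ 4 := by positivity
  by_cases hbig : M ≤ 4 * Bv + 6 * t / ε ^ 4
  · nlinarith
  · push_neg at hbig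
    have h6 : 6 * t / ε ^ 4 < M := by
      have : 0 ≤ 4 * Bv := by linarith
      linarith
    have h6' : 6 * t < M * ε ^ 4 := by
      rw [div_lt_iff₀ hε4] at h6; linarith
    have h4 : 4 * Bv < M := by
      have : 0 ≤ 6 * t / ε ^ 4 := by positivity
      linarith
    have hcheb : Y * (ε ^ 2 * (M - 2 * Bv)) ^ 2 ≤ 2 * t * M := hcheb' (by linarith)
    have hXε : 0 ≤ Y * ε ^ 4 := by positivity
    have hs : M * Y * ε ^ 4 ≤ 4 * Bv * ε ^ 4 + 6 * t := by
      by_cases h5 : 5 * Bv ≤ M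
      · have h3 : Y * ε ^ 4 * (3 * M / 5) ^ 2 ≤ 2 * t * M := by
          calc Y * ε ^ 4 * (3 * M / 5) ^ 2 ≤ Y * ε ^ 4 * (M - 2 * Bv) ^ 2 :=
              mul_le_mul_of_nonneg_left (by nlinarith) hXε
            _ = Y * (ε ^ 2 * (M - 2 * Bv)) ^ 2 := by ring
            _ ≤ 2 * t * M := hcheb
        nlinarith [mul_nonneg (mul_nonneg (by linarith : (0:ℝ) ≤ t) (by linarith : (0:ℝ) ≤ M)) hBv,
          mul_nonneg (mul_nonneg hBv hε4.le) (by linarith : (0:ℝ) ≤ M)]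
      · push_neg at h5
        have h3 : Y * ε ^ 4 * (M / 2) ^ 2 ≤ 2 * t * M := by
          calc Y * ε ^ 4 * (M / 2) ^ 2 ≤ Y * ε ^ 4 * (M - 2 * Bv) ^ 2 :=
              mul_le_mul_of_nonneg_left (by nlinarith) hXε
            _ = Y * (ε ^ 2 * (M - 2 * Bv)) ^ 2 := by ring
            _ ≤ 2 * t * M := hcheb
        nlinarith [mul_pos (by linarith : (0:ℝ) < t) (by linarith : (0:ℝ) < M)]
    calc M * Y = (M * Y * ε ^ 4) / ε ^ 4 := by field_simp
      _ ≤ (4 * Bv * ε ^ 4 + 6 * t) / ε ^ 4 := by gcongr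
      _ = 4 * Bv + 6 * t / ε ^ 4 := by field_simp

set_option maxHeartbeats 2000000 in
/-- light-constraint lemma.  Let `V` be a finite variable set with ground-truth
values `x* v ∈ {-1, 1}`, fix a variable `i`, and let `L` be a nonempty finite set of constraints,
each consisting of a pair of distinct variables `j ℓ ≠ k ℓ` and a sign `c ℓ ∈ {-1, 1}`, such that
every variable belongs to at most `t` constraints, `t ≥ 1`.  For label advice `x̃` with parameter
`ε ∈ (0, 1]`, with `σᵢ := sgn(∑_ℓ c ℓ * x̃(j ℓ) * x̃(k ℓ))`, representative cost
`Cost_R := |L| ⬝ 𝟙[σᵢ ≠ x* i]` and ground-truth cost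
`Cost_L := #{ℓ : x* i * x*(j ℓ) * x*(k ℓ) ≠ c ℓ}`, one has
`E[Cost_R] ≤ 4 Cost_L + 6 t / ε⁴`. -/
theorem light_constraint_representative_cost
    (V : Type*) [Fintype V] [DecidableEq V]
    (L : Type*) [Fintype L] [DecidableEq L] [Nonempty L]
    (xstar : V → ℝ) (hxs : ∀ v, xstar v = 1 ∨ xstar v = -1)
    (i : V)
    (j k : L → V) (hjk : ∀ ℓ, j ℓ ≠ k ℓ)
    (c : L → ℝ) (hc : ∀ ℓ, c ℓ = 1 ∨ c ℓ = -1)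
    (t : ℝ) (ht : 1 ≤ t)
    (hdeg : ∀ v : V, ((Finset.univ.filter fun ℓ => j ℓ = v ∨ k ℓ = v).card : ℝ) ≤ t)
    (ε : ℝ) (hε : ε ∈ Set.Ioc (0 : ℝ) 1) :
    (∑ s : V → Bool, advProb ε xstar s *
        ((Fintype.card L : ℝ) *
          (if Real.sign (∑ ℓ, c ℓ * sg (s (j ℓ)) * sg (s (k ℓ))) ≠ xstar i then 1 else 0)))
      ≤ 4 * ((Finset.univ.filter
            fun ℓ => xstar i * xstar (j ℓ) * xstar (k ℓ) ≠ c ℓ).card : ℝ)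
          + 6 * t / ε ^ 4 := by
  classical
  obtain ⟨hε0, hε1⟩ := hε
  set m : ℝ := (Fintype.card L : ℝ) with hm_def
  set B : ℝ := ((Finset.univ.filter
      fun ℓ => xstar i * xstar (j ℓ) * xstar (k ℓ) ≠ c ℓ).card : ℝ) with hB_def
  have hx2 : ∀ v, xstar v * xstar v = 1 := by
    intro v; rcases hxs v with h | h <;> rw [h] <;> norm_num
  set p : (V → Bool) → ℝ := advProb ε xstar with hp_def
  set d : L → ℝ := fun ℓ => xstar i * c ℓ * xstar (j ℓ) * xstar (k ℓ) with hd_def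
  set W : (V → Bool) → ℝ :=
    fun s => ∑ ℓ, d ℓ * ((sg (s (j ℓ)) * xstar (j ℓ)) * (sg (s (k ℓ)) * xstar (k ℓ)))
    with hW_def
  set D : L → L → Finset V :=
    fun ℓ ℓ' => ({j ℓ, k ℓ} : Finset V) \ {j ℓ', k ℓ'} ∪ {j ℓ', k ℓ'} \ {j ℓ, k ℓ}
    with hD_def
  have hm1 : (1 : ℝ) ≤ m := by
    rw [hm_def]; exact_mod_cast Nat.one_le_iff_ne_zero.mpr Fintype.card_ne_zero
  have hB0 : (0 : ℝ) ≤ B := by rw [hB_def]; positivity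
  have hε4 : (0 : ℝ) < ε ^ 4 := by positivity
  have hp_nonneg : ∀ s, 0 ≤ p s := by
    intro s
    apply Finset.prod_nonneg
    intro v _
    split <;> linarith
  have hp_sum : ∑ s : V → Bool, p s = 1 := by
    have := momentA ε xstar hxs (∅ : Finset V)
    simpa using this
  have hd1 : ∀ ℓ, d ℓ = 1 ∨ d ℓ = -1 := by
    intro ℓ
    rcases hxs i with hi | hi <;> rcases hxs (j ℓ) with h1 | h1 <;>
      rcases hxs (k ℓ) with h2 | h2 <;> rcases hc ℓ with h3 | h3 <;>
      simp [hd_def, hi, h1, h2, h3] <;> norm_num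
  -- W s = xstar i * (signed sum)
  have hWeq : ∀ s : V → Bool,
      W s = xstar i * ∑ ℓ, c ℓ * sg (s (j ℓ)) * sg (s (k ℓ)) := by
    intro s
    rw [hW_def, Finset.mul_sum]
    refine Finset.sum_congr rfl fun ℓ _ => ?_
    rcases hxs (j ℓ) with h1 | h1 <;> rcases hxs (k ℓ) with h2 | h2 <;>
      simp only [hd_def, h1, h2] <;> ring
  -- sum of d
  have hsum_d : ∑ ℓ, d ℓ = m - 2 * B := by
    have hd_ite : ∀ ℓ, d ℓ
        = if xstar i * xstar (j ℓ) * xstar (k ℓ) ≠ c ℓ then (-1 : ℝ) else 1 := by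
      intro ℓ
      rcases hxs i with hi | hi <;> rcases hxs (j ℓ) with h1 | h1 <;>
        rcases hxs (k ℓ) with h2 | h2 <;> rcases hc ℓ with h3 | h3 <;>
        simp [hd_def, hi, h1, h2, h3] <;> norm_num
    rw [Finset.sum_congr rfl fun ℓ _ => hd_ite ℓ, Finset.sum_ite, Finset.sum_const,
      Finset.sum_const, nsmul_eq_mul, nsmul_eq_mul, mul_neg_one, mul_one]
    have hcard := Finset.card_filter_add_card_filter_not
      (s := (Finset.univ : Finset L))
      (p := fun ℓ => xstar i * xstar (j ℓ) * xstar (k ℓ) ≠ c ℓ)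
    rw [Finset.card_univ] at hcard
    have hcardR : B + ((Finset.univ.filter
        fun ℓ => ¬ (xstar i * xstar (j ℓ) * xstar (k ℓ) ≠ c ℓ)).card : ℝ) = m := by
      rw [hB_def, hm_def]; exact_mod_cast hcard
    linarith
  -- first moment
  have hpair : ∀ ℓ : L, (∑ s : V → Bool,
      p s * ((sg (s (j ℓ)) * xstar (j ℓ)) * (sg (s (k ℓ)) * xstar (k ℓ)))) = ε ^ 2 := by
    intro ℓ
    have h := momentA ε xstar hxs ({j ℓ, k ℓ} : Finset V)
    rw [Finset.card_pair (hjk ℓ)] at h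
    rw [← h]
    refine Finset.sum_congr rfl fun s _ => ?_
    rw [Finset.prod_pair (hjk ℓ)]
  have hEW : ∑ s : V → Bool, p s * W s = ε ^ 2 * (m - 2 * B) := by
    calc ∑ s : V → Bool, p s * W s
        = ∑ s : V → Bool, ∑ ℓ, d ℓ *
            (p s * ((sg (s (j ℓ)) * xstar (j ℓ)) * (sg (s (k ℓ)) * xstar (k ℓ)))) := by
          refine Finset.sum_congr rfl fun s _ => ?_
          rw [hW_def, Finset.mul_sum]
          exact Finset.sum_congr rfl fun ℓ _ => by ring
      _ = ∑ ℓ, d ℓ * ∑ s : V → Bool,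
            p s * ((sg (s (j ℓ)) * xstar (j ℓ)) * (sg (s (k ℓ)) * xstar (k ℓ))) := by
          rw [Finset.sum_comm]
          exact Finset.sum_congr rfl fun ℓ _ => by rw [Finset.mul_sum]
      _ = ∑ ℓ, d ℓ * ε ^ 2 := Finset.sum_congr rfl fun ℓ _ => by rw [hpair ℓ]
      _ = ε ^ 2 * (m - 2 * B) := by rw [← Finset.sum_mul, hsum_d]; ring
  -- second moment
  have hfsq : ∀ (s : V → Bool) (v : V),
      (sg (s v) * xstar v) * (sg (s v) * xstar v) = 1 := by
    intro s v
    rcases hxs v with h | h <;> cases hb : s v <;> simp [sg, hb, h] <;> norm_num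
  have hpair2 : ∀ ℓ ℓ' : L, (∑ s : V → Bool,
      p s * (((sg (s (j ℓ)) * xstar (j ℓ)) * (sg (s (k ℓ)) * xstar (k ℓ))) *
             ((sg (s (j ℓ')) * xstar (j ℓ')) * (sg (s (k ℓ')) * xstar (k ℓ')))))
      = ε ^ (D ℓ ℓ').card := by
    intro ℓ ℓ'
    have h := momentA ε xstar hxs (D ℓ ℓ')
    rw [← h]
    refine Finset.sum_congr rfl fun s _ => ?_
    congr 1
    rw [hD_def, ← prod_mul_prod_eq_sdiffs _ (hfsq s), Finset.prod_pair (hjk ℓ),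
      Finset.prod_pair (hjk ℓ')]
  have hEW2eq : ∑ s : V → Bool, p s * (W s) ^ 2
      = ∑ ℓ, ∑ ℓ', d ℓ * d ℓ' * ε ^ (D ℓ ℓ').card := by
    calc ∑ s : V → Bool, p s * (W s) ^ 2
        = ∑ s : V → Bool, ∑ ℓ, ∑ ℓ', d ℓ * d ℓ' *
            (p s * (((sg (s (j ℓ)) * xstar (j ℓ)) * (sg (s (k ℓ)) * xstar (k ℓ))) *
             ((sg (s (j ℓ')) * xstar (j ℓ')) * (sg (s (k ℓ')) * xstar (k ℓ'))))) := by
          refine Finset.sum_congr rfl fun s _ => ?_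
          rw [hW_def, sq, Finset.sum_mul_sum, Finset.mul_sum]
          refine Finset.sum_congr rfl fun ℓ _ => ?_
          rw [Finset.mul_sum]
          exact Finset.sum_congr rfl fun ℓ' _ => by ring
      _ = ∑ ℓ, ∑ s : V → Bool, ∑ ℓ', d ℓ * d ℓ' *
            (p s * (((sg (s (j ℓ)) * xstar (j ℓ)) * (sg (s (k ℓ)) * xstar (k ℓ))) *
             ((sg (s (j ℓ')) * xstar (j ℓ')) * (sg (s (k ℓ')) * xstar (k ℓ'))))) :=
          Finset.sum_comm
      _ = ∑ ℓ, ∑ ℓ', ∑ s : V → Bool, d ℓ * d ℓ' *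
            (p s * (((sg (s (j ℓ)) * xstar (j ℓ)) * (sg (s (k ℓ)) * xstar (k ℓ))) *
             ((sg (s (j ℓ')) * xstar (j ℓ')) * (sg (s (k ℓ')) * xstar (k ℓ'))))) :=
          Finset.sum_congr rfl fun ℓ _ => Finset.sum_comm
      _ = ∑ ℓ, ∑ ℓ', d ℓ * d ℓ' * ε ^ (D ℓ ℓ').card := by
          refine Finset.sum_congr rfl fun ℓ _ => Finset.sum_congr rfl fun ℓ' _ => ?_
          rw [← Finset.mul_sum, hpair2 ℓ ℓ']
  -- variance bound
  have hshare : ∀ ℓ : L, ((Finset.univ.filter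
      fun ℓ' => ¬ Disjoint ({j ℓ, k ℓ} : Finset V) ({j ℓ', k ℓ'} : Finset V)).card : ℝ)
      ≤ 2 * t := by
    intro ℓ
    have hsub : (Finset.univ.filter
        fun ℓ' => ¬ Disjoint ({j ℓ, k ℓ} : Finset V) ({j ℓ', k ℓ'} : Finset V))
        ⊆ (Finset.univ.filter fun ℓ' => j ℓ' = j ℓ ∨ k ℓ' = j ℓ)
          ∪ (Finset.univ.filter fun ℓ' => j ℓ' = k ℓ ∨ k ℓ' = k ℓ) := by
      intro ℓ' h
      simp only [Finset.mem_filter, Finset.mem_union, Finset.mem_univ, true_and] at h ⊢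
      rw [Finset.not_disjoint_iff] at h
      obtain ⟨a, ha1, ha2⟩ := h
      simp only [Finset.mem_insert, Finset.mem_singleton] at ha1 ha2
      rcases ha1 with rfl | rfl <;> tauto
    calc ((Finset.univ.filter
        fun ℓ' => ¬ Disjoint ({j ℓ, k ℓ} : Finset V) ({j ℓ', k ℓ'} : Finset V)).card : ℝ)
        ≤ (((Finset.univ.filter fun ℓ' => j ℓ' = j ℓ ∨ k ℓ' = j ℓ)
          ∪ (Finset.univ.filter fun ℓ' => j ℓ' = k ℓ ∨ k ℓ' = k ℓ)).card : ℝ) := by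
          exact_mod_cast Finset.card_le_card hsub
      _ ≤ ((Finset.univ.filter fun ℓ' => j ℓ' = j ℓ ∨ k ℓ' = j ℓ).card : ℝ)
          + ((Finset.univ.filter fun ℓ' => j ℓ' = k ℓ ∨ k ℓ' = k ℓ).card : ℝ) := by
          exact_mod_cast Finset.card_union_le _ _
      _ ≤ t + t := add_le_add (hdeg (j ℓ)) (hdeg (k ℓ))
      _ = 2 * t := by ring
  have hterm : ∀ ℓ ℓ' : L, d ℓ * d ℓ' * ε ^ (D ℓ ℓ').card - d ℓ * d ℓ' * ε ^ 4
      ≤ (if ¬ Disjoint ({j ℓ, k ℓ} : Finset V) ({j ℓ', k ℓ'} : Finset V)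
          then (1 : ℝ) else 0) := by
    intro ℓ ℓ'
    by_cases hdis : Disjoint ({j ℓ, k ℓ} : Finset V) ({j ℓ', k ℓ'} : Finset V)
    · rw [if_neg (not_not_intro hdis)]
      have hD4 : (D ℓ ℓ').card = 4 := by
        rw [hD_def]
        simp only
        rw [Finset.sdiff_eq_self_iff_disjoint.mpr hdis, Finset.sdiff_eq_self_iff_disjoint.mpr hdis.symm,
          Finset.card_union_of_disjoint hdis, Finset.card_pair (hjk ℓ),
          Finset.card_pair (hjk ℓ')]
      rw [hD4]
      simp
    · rw [if_pos hdis]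
      have h1 : 0 ≤ ε ^ (D ℓ ℓ').card := by positivity
      have h2 : ε ^ (D ℓ ℓ').card ≤ 1 := pow_le_one₀ hε0.le hε1
      have h3 : (0:ℝ) ≤ ε ^ 4 := hε4.le
      have h4 : ε ^ 4 ≤ 1 := pow_le_one₀ hε0.le hε1
      rcases hd1 ℓ with h | h <;> rcases hd1 ℓ' with h' | h' <;> rw [h, h'] <;> nlinarith
  have hvar : (∑ ℓ, ∑ ℓ', d ℓ * d ℓ' * ε ^ (D ℓ ℓ').card)
      - (∑ ℓ, ∑ ℓ', d ℓ * d ℓ' * ε ^ 4) ≤ 2 * t * m := by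
    rw [← Finset.sum_sub_distrib]
    simp_rw [← Finset.sum_sub_distrib]
    calc ∑ ℓ, ∑ ℓ', (d ℓ * d ℓ' * ε ^ (D ℓ ℓ').card - d ℓ * d ℓ' * ε ^ 4)
        ≤ ∑ ℓ : L, (2 * t) := by
          refine Finset.sum_le_sum fun ℓ _ => ?_
          calc ∑ ℓ', (d ℓ * d ℓ' * ε ^ (D ℓ ℓ').card - d ℓ * d ℓ' * ε ^ 4)
              ≤ ∑ ℓ', (if ¬ Disjoint ({j ℓ, k ℓ} : Finset V) ({j ℓ', k ℓ'} : Finset V)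
                  then (1 : ℝ) else 0) := Finset.sum_le_sum fun ℓ' _ => hterm ℓ ℓ'
            _ = ((Finset.univ.filter fun ℓ' => ¬ Disjoint ({j ℓ, k ℓ} : Finset V)
                  ({j ℓ', k ℓ'} : Finset V)).card : ℝ) := by rw [Finset.sum_boole]
            _ ≤ 2 * t := hshare ℓ
      _ = m * (2 * t) := by rw [Finset.sum_const, Finset.card_univ, nsmul_eq_mul, hm_def]
      _ = 2 * t * m := by ring
  have hmusq : (ε ^ 2 * (m - 2 * B)) ^ 2 = ∑ ℓ, ∑ ℓ', d ℓ * d ℓ' * ε ^ 4 := by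
    rw [← hsum_d]
    rw [show ((ε^2 * ∑ ℓ, d ℓ)^2 = ((∑ ℓ, d ℓ) * (∑ ℓ', d ℓ')) * ε ^ 4) by ring,
      Finset.sum_mul_sum, Finset.sum_mul]
    exact Finset.sum_congr rfl fun ℓ _ => by
      rw [Finset.sum_mul]
  have hEW2 : ∑ s : V → Bool, p s * (W s) ^ 2
      ≤ (ε ^ 2 * (m - 2 * B)) ^ 2 + 2 * t * m := by
    rw [hEW2eq, hmusq]
    linarith [hvar]
  clear_value W p d D m B
  -- the probability X
  set X : ℝ := ∑ s : V → Bool, p s * (if W s ≤ 0 then (1 : ℝ) else 0) with hX_def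
  have hX0 : 0 ≤ X := by
    rw [hX_def]
    apply Finset.sum_nonneg
    intro s _
    apply mul_nonneg (hp_nonneg s)
    by_cases h : W s ≤ 0 <;> simp [h]
  have hX1 : X ≤ 1 := by
    rw [hX_def, ← hp_sum]
    apply Finset.sum_le_sum
    intro s _
    have := hp_nonneg s
    by_cases h : W s ≤ 0 <;> simp [h] <;> nlinarith
  -- reduction of the LHS
  have hLHS : (∑ s : V → Bool, p s *
      (m * (if Real.sign (∑ ℓ, c ℓ * sg (s (j ℓ)) * sg (s (k ℓ))) ≠ xstar i then 1 else 0)))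
      ≤ m * X := by
    have hind : ∀ s : V → Bool,
        (if Real.sign (∑ ℓ, c ℓ * sg (s (j ℓ)) * sg (s (k ℓ))) ≠ xstar i then (1:ℝ) else 0)
        ≤ (if W s ≤ 0 then (1:ℝ) else 0) := by
      intro s
      by_cases hw : W s ≤ 0
      · rw [if_pos hw]
        split <;> norm_num
      · push_neg at hw
        have hY : Real.sign (∑ ℓ, c ℓ * sg (s (j ℓ)) * sg (s (k ℓ))) = xstar i := by
          rcases hxs i with hi | hi
          · have hpos : 0 < ∑ ℓ, c ℓ * sg (s (j ℓ)) * sg (s (k ℓ)) := by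
              rw [hWeq s, hi, one_mul] at hw; exact hw
            rw [Real.sign_of_pos hpos, hi]
          · have hneg : (∑ ℓ, c ℓ * sg (s (j ℓ)) * sg (s (k ℓ))) < 0 := by
              rw [hWeq s, hi] at hw; nlinarith
            rw [Real.sign_of_neg hneg, hi]
        rw [if_neg (not_le.mpr hw), if_neg (by simp [hY])]
    calc (∑ s : V → Bool, p s *
        (m * (if Real.sign (∑ ℓ, c ℓ * sg (s (j ℓ)) * sg (s (k ℓ))) ≠ xstar i then 1 else 0)))
        ≤ ∑ s : V → Bool, p s * (m * (if W s ≤ 0 then (1:ℝ) else 0)) := by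
          refine Finset.sum_le_sum fun s _ => ?_
          have hm0 : (0:ℝ) ≤ m := by linarith
          exact mul_le_mul_of_nonneg_left
            (mul_le_mul_of_nonneg_left (hind s) hm0) (hp_nonneg s)
      _ = m * X := by
          rw [hX_def, Finset.mul_sum]
          exact Finset.sum_congr rfl fun s _ => by ring
  -- Chebyshev
  have hcheb : 2 * B < m → X * (ε ^ 2 * (m - 2 * B)) ^ 2 ≤ 2 * t * m := by
    intro hμ'
    set μ : ℝ := ε ^ 2 * (m - 2 * B) with hμ_def
    have hμpos : 0 < μ := by
      rw [hμ_def]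
      have : 0 < ε ^ 2 := by positivity
      nlinarith
    have hpoint : ∀ s : V → Bool,
        p s * (if W s ≤ 0 then (1:ℝ) else 0) * μ ^ 2 ≤ p s * (W s - μ) ^ 2 := by
      intro s
      by_cases hw : W s ≤ 0
      · rw [if_pos hw, mul_one]
        apply mul_le_mul_of_nonneg_left _ (hp_nonneg s)
        nlinarith
      · rw [if_neg hw, mul_zero, zero_mul]
        exact mul_nonneg (hp_nonneg s) (sq_nonneg _)
    have hexpand : ∑ s : V → Bool, p s * (W s - μ) ^ 2
        = (∑ s : V → Bool, p s * (W s) ^ 2) - 2 * μ * (∑ s : V → Bool, p s * W s)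
          + μ ^ 2 * (∑ s : V → Bool, p s) := by
      have hterm' : ∀ s : V → Bool, p s * (W s - μ) ^ 2
          = p s * (W s) ^ 2 - 2 * μ * (p s * W s) + μ ^ 2 * p s := fun s => by ring
      rw [Finset.sum_congr rfl fun s _ => hterm' s, Finset.sum_add_distrib,
        Finset.sum_sub_distrib, ← Finset.mul_sum, ← Finset.mul_sum]
    calc X * μ ^ 2 = ∑ s : V → Bool, p s * (if W s ≤ 0 then (1:ℝ) else 0) * μ ^ 2 := by
          rw [hX_def, Finset.sum_mul]
      _ ≤ ∑ s : V → Bool, p s * (W s - μ) ^ 2 := Finset.sum_le_sum fun s _ => hpoint s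
      _ = (∑ s : V → Bool, p s * (W s) ^ 2) - 2 * μ * (∑ s : V → Bool, p s * W s)
          + μ ^ 2 * (∑ s : V → Bool, p s) := hexpand
      _ = (∑ s : V → Bool, p s * (W s) ^ 2) - μ ^ 2 := by
          rw [hEW, hp_sum, hμ_def]; ring
      _ ≤ 2 * t * m := by linarith [hEW2]
  -- conclusion
  refine le_trans hLHS ?_
  exact arith_endgame ε t hε0 ht m B X hm1 hB0 hX0 hX1 hcheb
end

section
/- Let I be a Max 3-Lin instance over GF(2) on variable set [n] with a finite nonempty set E of constraints, each constraint e ∈ E being of the form x_{i_e} ⊕ x_{j_e} ⊕ x_{k_e} = b_e with b_e ∈ {0,1}. For an integer t ≥ 1, let I' be the Max 4-Lin instance on variable set [n] ∪ {y₁,…,y_t} whose constraint set is {e^r : e ∈ E, r ∈ [t]}, where e^r is the constraint x_{i_e} ⊕ x_{j_e} ⊕ x_{k_e} ⊕ y_r = b_e. Then Val(I') = Val(I), where Val denotes the maximum over all {0,1}-assignments to the variables of the fraction of constraints satisfied. -/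
open Finset

/-- Let `I` be a Max 3-Lin instance over GF(2) on variables `Fin n` with a
nonempty finite constraint set `E`, each constraint `e` reading
`x (i e) + x (j e) + x (k e) = b e` over `ZMod 2`.  For `t ≥ 1`, let `I'` be the Max 4-Lin
instance on variables `Fin n ⊕ Fin t` with constraints `x (i e) + x (j e) + x (k e) + y r = b e`
for every `e ∈ E` and `r ∈ Fin t`.  Then `Val(I') = Val(I)`, where `Val` is the maximum over
`{0,1}`-assignments of the fraction of satisfied constraints. -/
theorem max3lin_to_max4lin_value_preserved
    (n : ℕ) (E : Type*) [Fintype E] [Nonempty E]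
    (i j k : E → Fin n) (b : E → ZMod 2)
    (t : ℕ) (ht : 1 ≤ t) :
    (⨆ xy : (Fin n → ZMod 2) × (Fin t → ZMod 2),
        (((Finset.univ.filter fun er : E × Fin t =>
            xy.1 (i er.1) + xy.1 (j er.1) + xy.1 (k er.1) + xy.2 er.2 = b er.1).card : ℝ)
          / (Fintype.card (E × Fin t) : ℝ)))
      = ⨆ x : Fin n → ZMod 2,
          (((Finset.univ.filter fun e : E =>
              x (i e) + x (j e) + x (k e) = b e).card : ℝ) / (Fintype.card E : ℝ)) := by
  classical
  have hE : (0:ℝ) < Fintype.card E := by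
    exact_mod_cast Fintype.card_pos
  have htpos : (0:ℝ) < t := by exact_mod_cast ht
  set f : (Fin n → ZMod 2) → ℝ := fun x =>
    (((univ.filter fun e : E => x (i e) + x (j e) + x (k e) = b e).card : ℝ)
      / (Fintype.card E : ℝ)) with hf
  set g : (Fin n → ZMod 2) × (Fin t → ZMod 2) → ℝ := fun xy =>
    (((univ.filter fun er : E × Fin t =>
        xy.1 (i er.1) + xy.1 (j er.1) + xy.1 (k er.1) + xy.2 er.2 = b er.1).card : ℝ)
      / (Fintype.card (E × Fin t) : ℝ)) with hg
  have hbddf : BddAbove (Set.range f) := (Set.finite_range f).bddAbove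
  have hbddg : BddAbove (Set.range g) := (Set.finite_range g).bddAbove
  have hcardprod : (Fintype.card (E × Fin t) : ℝ) = (Fintype.card E : ℝ) * t := by
    simp [Fintype.card_prod]
  have h2 : ∀ a : ZMod 2, a + a = 0 := by decide
  apply le_antisymm
  · apply ciSup_le
    intro xy
    have key : ((univ.filter fun er : E × Fin t =>
        xy.1 (i er.1) + xy.1 (j er.1) + xy.1 (k er.1) + xy.2 er.2 = b er.1).card)
        = ∑ r : Fin t, (univ.filter fun e : E =>
            (xy.1 (i e) + xy.2 r) + (xy.1 (j e) + xy.2 r) + (xy.1 (k e) + xy.2 r)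
              = b e).card := by
      rw [Finset.card_filter, Fintype.sum_prod_type_right]
      refine Finset.sum_congr rfl fun r _ => ?_
      rw [Finset.card_filter]
      refine Finset.sum_congr rfl fun e _ => ?_
      congr 1
      have : (xy.1 (i e) + xy.2 r) + (xy.1 (j e) + xy.2 r) + (xy.1 (k e) + xy.2 r)
          = xy.1 (i e) + xy.1 (j e) + xy.1 (k e) + xy.2 r := by
        linear_combination h2 (xy.2 r)
      simp [this]
    have hle : ∀ r : Fin t,
        ((univ.filter fun e : E =>
            (xy.1 (i e) + xy.2 r) + (xy.1 (j e) + xy.2 r) + (xy.1 (k e) + xy.2 r)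
              = b e).card : ℝ)
          ≤ (⨆ x : Fin n → ZMod 2, f x) * (Fintype.card E : ℝ) := by
      intro r
      have := le_ciSup hbddf (fun v => xy.1 v + xy.2 r)
      rw [hf] at this
      rw [← div_le_iff₀ hE]
      exact this
    rw [hg, div_le_iff₀ (by rw [hcardprod]; positivity), key]
    push_cast
    calc (∑ r : Fin t, ((univ.filter fun e : E =>
            (xy.1 (i e) + xy.2 r) + (xy.1 (j e) + xy.2 r) + (xy.1 (k e) + xy.2 r)
              = b e).card : ℝ))
        ≤ ∑ _r : Fin t, (⨆ x : Fin n → ZMod 2, f x) * (Fintype.card E : ℝ) :=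
          Finset.sum_le_sum fun r _ => hle r
      _ = (⨆ x : Fin n → ZMod 2, f x) * (Fintype.card (E × Fin t) : ℝ) := by
          rw [Finset.sum_const, hcardprod]
          simp [mul_comm, mul_assoc, mul_left_comm]
  · apply ciSup_le
    intro x
    refine le_trans (le_of_eq ?_) (le_ciSup hbddg (x, 0))
    rw [hg]
    have key : ((univ.filter fun er : E × Fin t =>
        x (i er.1) + x (j er.1) + x (k er.1) + (0 : Fin t → ZMod 2) er.2 = b er.1).card)
        = t * (univ.filter fun e : E => x (i e) + x (j e) + x (k e) = b e).card := by
      rw [Finset.card_filter, Fintype.sum_prod_type_right]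
      have : ∀ r : Fin t, (∑ e : E, if x (i e) + x (j e) + x (k e) + (0 : Fin t → ZMod 2) r = b e then 1 else 0)
          = (univ.filter fun e : E => x (i e) + x (j e) + x (k e) = b e).card := by
        intro r
        rw [Finset.card_filter]
        refine Finset.sum_congr rfl fun e _ => ?_
        simp
      simp only [this]
      simp [Finset.sum_const, mul_comm]
    simp only [key, hcardprod]
    push_cast
    rw [mul_comm (t:ℝ)]
    rw [mul_div_mul_right _ _ htpos.ne']
end
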